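/- arXiv:0807.3972 — 9 statements merged into one kernel-verified Lean document; each statement's English description precedes it below -/
import Mathlib

section
/- Let t ∈ ℝ, s = 1/2 + it, and let f : D → ℝ be a bounded, twice continuously differentiable function on the open unit disk D ⊂ ℂ satisfying ((1−|z|²)²/4)·(∂²f/∂x² + ∂²f/∂y²)(z) = −(1/4 + t²)·f(z) on D. Let D̃ : [0,2π] → ℂ be the continuous function with D̃(0) = 0 to which α ↦ ∫₀^α K(r,θ) dθ converges uniformly as r → +∞, where K(r,θ) = e^{−sr}·(∂F/∂r(r,θ) + s·F(r,θ))·sinh(r) and F(r,θ) = f(tanh(r/2)e^{iθ}). Then for every 0 ≤ α < β ≤ 2π and every continuously differentiable ψ : ℂ → ℂ, setting ψ̃(θ) = ψ(e^{iθ}), one has lim_{r→+∞} ∫_α^β ψ(tanh(r/2)e^{iθ})·K(r,θ) dθ = ψ̃(β)·D̃(β) − ψ̃(α)·D̃(α) − ∫_α^β ψ̃'(θ)·D̃(θ) dθ. -/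
/-!
For fixed `r`, integrate by parts against the primitive `H r x = ∫₀ˣ K(r,θ) dθ`: the integral
`∫_α^β ψ(c e^{iθ}) K(r,θ) dθ`, with `c = tanh (r/2)`, becomes the boundary terms
`ψ(c e^{iθ}) H r θ` at `β` and `α` minus `∫_α^β ∂_θ ψ(c e^{iθ}) H r θ dθ`.
As `r → ∞`, `c → 1`; since `ψ` is `C¹`, `∂_θ ψ(c e^{iθ})` is jointly continuous in `(c, θ)`,
hence bounded near `c = 1` and convergent pointwise, while `H r → D̃` uniformly.
Dominated convergence then passes the limit through the remaining integral.
-/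

open Complex Real Set Filter MeasureTheory Topology

noncomputable section

/-- The Euclidean Laplacian `∂²f/∂x² + ∂²f/∂y²` of `f : ℂ → ℝ` at `z`. -/
def lap2 (f : ℂ → ℝ) (z : ℂ) : ℝ :=
  deriv (fun x : ℝ => deriv (fun u : ℝ => f ((u : ℂ) + z.im * Complex.I)) x) z.re +
  deriv (fun y : ℝ => deriv (fun v : ℝ => f ((z.re : ℂ) + v * Complex.I)) y) z.im

/-- `F(r,θ) = f(tanh(r/2)·e^{iθ})`. -/
def Fpol (f : ℂ → ℝ) (r θ : ℝ) : ℝ :=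
  f ((Real.tanh (r / 2) : ℂ) * Complex.exp (θ * Complex.I))

/-- `K(r,θ) = e^{−sr}·(∂F/∂r(r,θ) + s·F(r,θ))·sinh r`. -/
def Kker (f : ℂ → ℝ) (s : ℂ) (r θ : ℝ) : ℂ :=
  Complex.exp (-s * r) *
    ((deriv (fun r' : ℝ => Fpol f r' θ) r : ℂ) + s * (Fpol f r θ : ℂ)) * (Real.sinh r : ℂ)

open scoped Interval

theorem Real.contDiff_tanh {n : WithTop ℕ∞} : ContDiff ℝ n Real.tanh := by
  rw [show Real.tanh = fun x => Real.sinh x / Real.cosh x from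
    funext Real.tanh_eq_sinh_div_cosh]
  exact Real.contDiff_sinh.div Real.contDiff_cosh fun x => (Real.cosh_pos x).ne'

theorem Real.tendsto_tanh_atTop : Tendsto Real.tanh atTop (𝓝 1) := by
  have h : ∀ x, (1 - Real.exp (-x) ^ 2) / (1 + Real.exp (-x) ^ 2) = Real.tanh x := by
    intro x
    have hx : Real.exp x * Real.exp (-x) = 1 := by rw [← Real.exp_add, add_neg_cancel, exp_zero]
    rw [Real.tanh_eq, div_eq_div_iff (by positivity) (by positivity)]
    linear_combination -2 * Real.exp (-x) * hx
  have hexp : Tendsto (fun x : ℝ => Real.exp (-x) ^ 2) atTop (𝓝 0) := by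
    simpa using (Real.tendsto_exp_neg_atTop_nhds_zero.pow 2)
  have := ((tendsto_const_nhds (x := (1 : ℝ))).sub hexp).div
    ((tendsto_const_nhds (x := (1 : ℝ))).add hexp) (by norm_num)
  rw [sub_zero, add_zero, div_one] at this
  exact this.congr h

theorem Complex.ofReal_tanh_mul_exp_mul_I_mem_ball (x θ : ℝ) :
    (Real.tanh x : ℂ) * Complex.exp (θ * Complex.I) ∈ Metric.ball (0 : ℂ) 1 := by
  simpa only [Metric.mem_ball, dist_zero_right, norm_mul, Complex.norm_exp_ofReal_mul_I, mul_one,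
    Complex.norm_real, Real.norm_eq_abs] using Real.abs_tanh_lt_one x

theorem contDiff_uncurry_Fpol {f : ℂ → ℝ} {n : WithTop ℕ∞}
    (hf : ContDiffOn ℝ n f (Metric.ball 0 1)) :
    ContDiff ℝ n fun p : ℝ × ℝ => Fpol f p.1 p.2 := by
  have hofReal : ContDiff ℝ n fun x : ℝ => (x : ℂ) := Complex.ofRealCLM.contDiff
  have htanh : ContDiff ℝ n Real.tanh := Real.contDiff_tanh
  exact hf.comp_contDiff (by fun_prop) fun p => Complex.ofReal_tanh_mul_exp_mul_I_mem_ball _ p.2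

theorem continuous_Kker {f : ℂ → ℝ} (hf : ContDiffOn ℝ 1 f (Metric.ball 0 1)) (s : ℂ) (r : ℝ) :
    Continuous (Kker f s r) := by
  set F : ℝ × ℝ → ℝ := fun p => Fpol f p.1 p.2
  have hF : ContDiff ℝ 1 F := contDiff_uncurry_Fpol hf
  have hdF (θ : ℝ) : HasDerivAt (fun r' => F (r', θ)) (fderiv ℝ F (r, θ) (1, 0)) r :=
    (hF.differentiable one_ne_zero (r, θ)).hasFDerivAt.comp_hasDerivAt (f := fun x => (x, θ)) r
      ((hasDerivAt_id' r).prodMk (hasDerivAt_const r θ))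
  -- The cast to `ℂ` in `Kker` is elaborated inside `deriv`, which thus differentiates
  -- `r' ↦ (F (r', θ) : ℂ)`.
  have hdFc : Continuous fun θ => deriv (fun r' => (F (r', θ) : ℂ)) r := by
    have h : Continuous fun θ => fderiv ℝ F (r, θ) (1, 0) :=
      ((hF.continuous_fderiv one_ne_zero).comp (continuous_const.prodMk continuous_id)).clm_apply
        continuous_const
    exact (continuous_ofReal.comp h).congr fun θ => (hdF θ).ofReal_comp.deriv.symm
  have hFc : Continuous fun θ => F (r, θ) :=
    hF.continuous.comp (continuous_const.prodMk continuous_id)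
  unfold Kker
  exact (continuous_const.mul (hdFc.add
    (continuous_const.mul (continuous_ofReal.comp hFc)))).mul continuous_const

theorem hasDerivAt_comp_mul_exp_mul_I {ψ : ℂ → ℂ} (hψ : Differentiable ℝ ψ) (c : ℂ) (θ : ℝ) :
    HasDerivAt (fun θ' : ℝ => ψ (c * Complex.exp (θ' * Complex.I)))
      (fderiv ℝ ψ (c * Complex.exp (θ * Complex.I)) (c * Complex.exp (θ * Complex.I) * Complex.I))
      θ := by
  have hexp : HasDerivAt (fun θ' : ℝ => c * Complex.exp (θ' * Complex.I))
      (c * Complex.exp (θ * Complex.I) * Complex.I) θ := by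
    simpa [mul_assoc] using
      (((hasDerivAt_id' θ).ofReal_comp.mul_const Complex.I).cexp).const_mul c
  exact (hψ _).hasFDerivAt.comp_hasDerivAt θ hexp

theorem continuous_deriv_comp_mul_exp_mul_I {ψ : ℂ → ℂ} (hψ : ContDiff ℝ 1 ψ) :
    Continuous fun p : ℂ × ℝ => deriv (fun θ : ℝ => ψ (p.1 * Complex.exp (θ * Complex.I))) p.2 := by
  have h : Continuous fun p : ℂ × ℝ => fderiv ℝ ψ (p.1 * Complex.exp (p.2 * Complex.I))
      (p.1 * Complex.exp (p.2 * Complex.I) * Complex.I) :=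
    ((hψ.continuous_fderiv one_ne_zero).comp (by fun_prop)).clm_apply (by fun_prop)
  exact h.congr fun p =>
    (hasDerivAt_comp_mul_exp_mul_I (hψ.differentiable one_ne_zero) p.1 p.2).deriv.symm

theorem intervalIntegral.integral_mul_eq_sub_integral_deriv_mul_primitive {A : Type*} [NormedRing A]
    [NormedAlgebra ℝ A] [CompleteSpace A] {a b c : ℝ} {g g' k : ℝ → A}
    (hg : ∀ x ∈ [[a, b]], HasDerivAt g (g' x) x) (hg' : IntervalIntegrable g' volume a b)
    (hk : Continuous k) :
    ∫ x in a..b, g x * k x = g b * (∫ y in c..b, k y) - g a * (∫ y in c..a, k y) -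
      ∫ x in a..b, g' x * ∫ y in c..x, k y :=
  integral_mul_deriv_eq_deriv_mul hg (fun x _ => (hk.integral_hasStrictDerivAt c x).hasDerivAt) hg'
    (hk.intervalIntegrable a b)

theorem intervalIntegral.tendsto_integral_mul_of_tendstoUniformlyOn {ι 𝕜 : Type*} [RCLike 𝕜]
    {l : Filter ι} [l.IsCountablyGenerated] [l.NeBot] {a b C : ℝ} {u v : ι → ℝ → 𝕜} {U V : ℝ → 𝕜}
    (hu : ∀ i, Continuous (u i)) (hv : ∀ i, Continuous (v i))
    (hu_bdd : ∀ᶠ i in l, ∀ x ∈ Ι a b, ‖u i x‖ ≤ C)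
    (hu_lim : ∀ x ∈ Ι a b, Tendsto (fun i => u i x) l (𝓝 (U x)))
    (hv_lim : TendstoUniformlyOn v V l [[a, b]]) :
    Tendsto (fun i => ∫ x in a..b, u i x * v i x) l (𝓝 (∫ x in a..b, U x * V x)) := by
  obtain ⟨C', hC'⟩ := isCompact_uIcc.exists_bound_of_continuousOn
    (hv_lim.continuousOn (Frequently.of_forall fun i => (hv i).continuousOn))
  have hv_bdd : ∀ᶠ i in l, ∀ x ∈ Ι a b, ‖v i x‖ ≤ C' + 1 := by
    filter_upwards [Metric.tendstoUniformlyOn_iff.1 hv_lim 1 one_pos] with i hi x hx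
    have hx' := uIoc_subset_uIcc hx
    calc ‖v i x‖ ≤ ‖V x‖ + dist (V x) (v i x) := by
          rw [dist_eq_norm]; exact norm_le_norm_add_norm_sub _ _
      _ ≤ C' + 1 := add_le_add (hC' x hx') (hi x hx').le
  refine tendsto_integral_filter_of_dominated_convergence (fun _ => C * (C' + 1))
    (Eventually.of_forall fun i => ((hu i).mul (hv i)).aestronglyMeasurable)
    ?_ intervalIntegrable_const
    (ae_of_all _ fun x hx => (hu_lim x hx).mul (hv_lim.tendsto_at (uIoc_subset_uIcc hx)))
  filter_upwards [hu_bdd, hv_bdd] with i hui hvi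
  refine ae_of_all _ fun x hx => ?_
  rw [norm_mul]
  exact mul_le_mul (hui x hx) (hvi x hx) (norm_nonneg _) ((norm_nonneg _).trans (hui x hx))

theorem tendsto_integral_comp_mul_exp_mul_I_mul_of_tendstoUniformlyOn {ι : Type*} {l : Filter ι}
    [l.IsCountablyGenerated] [l.NeBot] {ψ : ℂ → ℂ} (hψ : ContDiff ℝ 1 ψ) {c : ι → ℂ}
    (hc : Tendsto c l (𝓝 1)) {K : ι → ℝ → ℂ} (hK : ∀ i, Continuous (K i)) {D : ℝ → ℂ}
    {a b x₀ : ℝ} (hD : TendstoUniformlyOn (fun i x => ∫ y in x₀..x, K i y) D l [[a, b]]) :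
    Tendsto (fun i => ∫ θ in a..b, ψ (c i * Complex.exp (θ * Complex.I)) * K i θ) l
      (𝓝 (ψ (Complex.exp (b * Complex.I)) * D b - ψ (Complex.exp (a * Complex.I)) * D a -
        ∫ θ in a..b, deriv (fun θ' : ℝ => ψ (Complex.exp (θ' * Complex.I))) θ * D θ)) := by
  have hψ' := continuous_deriv_comp_mul_exp_mul_I hψ
  have hψ'c (z : ℂ) : Continuous fun θ : ℝ =>
      deriv (fun θ' : ℝ => ψ (z * Complex.exp (θ' * Complex.I))) θ :=
    hψ'.comp (continuous_const.prodMk continuous_id)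
  have hψ_lim (x : ℝ) : Tendsto (fun i => ψ (c i * Complex.exp (x * Complex.I))) l
      (𝓝 (ψ (Complex.exp (x * Complex.I)))) := by
    have := (hψ.continuous.tendsto _).comp (hc.mul_const (Complex.exp (x * Complex.I)))
    rwa [one_mul] at this
  obtain ⟨C, hC⟩ := ((isCompact_closedBall (1 : ℂ) 1).prod (isCompact_uIcc (a := a) (b := b))
    ).exists_bound_of_continuousOn hψ'.continuousOn
  have hint : Tendsto (fun i => ∫ θ in a..b,
      deriv (fun θ' : ℝ => ψ (c i * Complex.exp (θ' * Complex.I))) θ * ∫ y in x₀..θ, K i y) l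
      (𝓝 (∫ θ in a..b, deriv (fun θ' : ℝ => ψ (1 * Complex.exp (θ' * Complex.I))) θ * D θ)) := by
    refine intervalIntegral.tendsto_integral_mul_of_tendstoUniformlyOn (C := C) (fun i => hψ'c _)
      (fun i => intervalIntegral.continuous_primitive (fun a b => (hK i).intervalIntegrable a b) x₀)
      ?_ (fun x _ => ?_) hD
    · filter_upwards [hc (Metric.closedBall_mem_nhds 1 one_pos)] with i hi x hx
      exact hC (c i, x) ⟨hi, uIoc_subset_uIcc hx⟩
    · have h := (hψ'.tendsto (1, x)).comp (hc.prodMk_nhds (tendsto_const_nhds (x := x)))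
      simpa only [Function.comp_def] using h
  have hibp (i : ι) := intervalIntegral.integral_mul_eq_sub_integral_deriv_mul_primitive (c := x₀)
    (fun x _ => (hasDerivAt_comp_mul_exp_mul_I (hψ.differentiable one_ne_zero)
      (c i) x).differentiableAt.hasDerivAt)
    ((hψ'c _).intervalIntegrable a b) (hK i)
  refine ((((hψ_lim b).mul (hD.tendsto_at right_mem_uIcc)).sub
    ((hψ_lim a).mul (hD.tendsto_at left_mem_uIcc))).sub ?_).congr fun i => (hibp i).symm
  simpa only [one_mul] using hint

theorem stmt4_general (t : ℝ) (f : ℂ → ℝ)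
    (hf_reg : ContDiffOn ℝ 2 f (Metric.ball (0 : ℂ) 1))
    (Dt : ℝ → ℂ)
    (hDt_lim : TendstoUniformlyOn
      (fun (r : ℝ) (α : ℝ) => ∫ θ in (0 : ℝ)..α, Kker f (1 / 2 + t * Complex.I) r θ)
      Dt atTop (Icc 0 (2 * π))) :
    ∀ α β : ℝ, 0 ≤ α → α < β → β ≤ 2 * π →
      ∀ ψ : ℂ → ℂ, ContDiff ℝ 1 ψ →
        Tendsto (fun r : ℝ => ∫ θ in α..β,
            ψ ((Real.tanh (r / 2) : ℂ) * Complex.exp (θ * Complex.I)) *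
              Kker f (1 / 2 + t * Complex.I) r θ) atTop
          (𝓝 (ψ (Complex.exp (β * Complex.I)) * Dt β - ψ (Complex.exp (α * Complex.I)) * Dt α -
            ∫ θ in α..β, deriv (fun θ' : ℝ => ψ (Complex.exp (θ' * Complex.I))) θ * Dt θ)) := by
  intro α β hα hαβ hβ ψ hψ
  have hc : Tendsto (fun r : ℝ => (Real.tanh (r / 2) : ℂ)) atTop (𝓝 1) := by
    have := (continuous_ofReal.tendsto 1).comp
      (Real.tendsto_tanh_atTop.comp (tendsto_id.atTop_div_const two_pos))
    rwa [Complex.ofReal_one] at this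
  exact tendsto_integral_comp_mul_exp_mul_I_mul_of_tendstoUniformlyOn hψ hc
    (continuous_Kker (hf_reg.of_le one_le_two) _)
    (hDt_lim.mono (by rw [uIcc_of_le hαβ.le]; exact Icc_subset_Icc hα hβ))

/-- Proposition 2 of the paper: the Helgason distribution extends to `C¹` test functions on a
boundary interval `{e^{iθ} : α ≤ θ ≤ β}`, computed by integration by parts against `D̃`. -/
theorem stmt4 (t : ℝ) (f : ℂ → ℝ)
    (hf_bdd : ∃ M : ℝ, ∀ z ∈ Metric.ball (0 : ℂ) 1, |f z| ≤ M)
    (hf_reg : ContDiffOn ℝ 2 f (Metric.ball (0 : ℂ) 1))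
    (hf_eig : ∀ z ∈ Metric.ball (0 : ℂ) 1,
      (1 - ‖z‖ ^ 2) ^ 2 / 4 * lap2 f z = -(1 / 4 + t ^ 2) * f z)
    (Dt : ℝ → ℂ)
    (hDt_cont : ContinuousOn Dt (Icc 0 (2 * π)))
    (hDt_zero : Dt 0 = 0)
    (hDt_lim : TendstoUniformlyOn
      (fun (r : ℝ) (α : ℝ) => ∫ θ in (0 : ℝ)..α, Kker f (1 / 2 + t * Complex.I) r θ)
      Dt atTop (Icc 0 (2 * π))) :
    ∀ α β : ℝ, 0 ≤ α → α < β → β ≤ 2 * π →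
      ∀ ψ : ℂ → ℂ, ContDiff ℝ 1 ψ →
        Tendsto (fun r : ℝ => ∫ θ in α..β,
            ψ ((Real.tanh (r / 2) : ℂ) * Complex.exp (θ * Complex.I)) *
              Kker f (1 / 2 + t * Complex.I) r θ) atTop
          (𝓝 (ψ (Complex.exp (β * Complex.I)) * Dt β - ψ (Complex.exp (α * Complex.I)) * Dt α -
            ∫ θ in α..β, deriv (fun θ' : ℝ => ψ (Complex.exp (θ' * Complex.I))) θ * Dt θ)) :=
  stmt4_general t f hf_reg Dt hDt_lim
end
end

section
/- Fix s ∈ ℂ. Let D̃ : ℝ → ℂ be continuous with D̃(0) = 0 and D̃(θ + 2π) = D̃(θ) + D̃(2π) for all θ; for a C¹ function φ : [a,b] → ℂ set Λ_{[a,b]}(φ) = φ(b)D̃(b) − φ(a)D̃(a) − ∫_a^b φ'(θ)D̃(θ)dθ. Let 0 = θ₀ < θ₁ < ⋯ < θ_q = 2π, and for each k ∈ {1,…,q} let γ_k be a Möbius automorphism of the unit disk with lift γ̃_k : ℝ → ℝ, and assume: (Markov) there exist an integer m_k and indices 0 ≤ a_k < b_k ≤ q with γ̃_k(θ_{k−1})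 = θ_{a_k} + 2πm_k and γ̃_k(θ_k) = θ_{b_k} + 2πm_k; (equivariance) for all real a ≤ b with b − a ≤ 2π and all C¹ φ : [a,b] → ℂ, Λ_{[a,b]}(φ) = Λ_{[γ̃_k(a),γ̃_k(b)]}(φ∘γ̃_k^{−1}·(γ̃_k'∘γ̃_k^{−1})^{−s}). Then for every family of C¹ functions φ_k : [θ_{k−1},θ_k] → ℂ (k = 1,…,q): Σ_{l=1}^q Λ_{[θ_{l−1},θ_l]}((Lφ)_l) = Σ_{k=1}^q Λ_{[θ_{k−1},θ_k]}(φ_k), where for θ ∈ [θ_{l−1},θ_l], (Lφ)_l(θ) = Σ_{k : a_k < l ≤ b_k} φ_k(γ̃_k^{−1}(θ + 2πm_k))·(γ̃_k'(γ̃_k^{−1}(θ + 2πm_k)))^{−s}. -/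
/-!
Expanding `Lφ` by linearity of `Λ`, the left side becomes a double sum over the pairs `(k, l)`
for which `γ̃_k` maps `[θ_{k-1}, θ_k]` over `[θ_{l-1}, θ_l] + 2πm_k`. Two properties of `Λ` collapse
the inner sum over `l`: it is additive over adjacent intervals, and it is invariant under the
translation by `2πm_k`, because `D̃(θ + 2πm) = D̃(θ) + m D̃(2π)` and the constant `m D̃(2π)`
contributes `m D̃(2π) (φ(b) - φ(a) - ∫_a^b φ') = 0`. What is left is `Λ` of the transported
function over `γ̃_k([θ_{k-1}, θ_k])`, which equivariance turns into `Λ_{[θ_{k-1},θ_k]}(φ_k)`.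

The transported functions are `C¹` because `γ̃_k' = |B̄_k e^{iθ} + Ā_k|⁻² > 0` is smooth: the
primitive `G(θ) = γ̃_k(0) + ∫_0^θ |B̄_k e^{it} + Ā_k|⁻² dt` satisfies `e^{iG(θ)} = γ_k(e^{iθ})`,
so `G = γ̃_k` by uniqueness of lifts through the covering map `exp`.
-/

open Complex Real Set Filter MeasureTheory Topology ComplexConjugate

noncomputable section

/-- The integration-by-parts pairing
`Λ_{[a,b]}(φ) = φ(b)D̃(b) − φ(a)D̃(a) − ∫_a^b φ'(θ)D̃(θ)dθ`. -/
def Lam (Dt : ℝ → ℂ) (a b : ℝ) (φ : ℝ → ℂ) : ℂ :=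
  φ b * Dt b - φ a * Dt a - ∫ θ in a..b, derivWithin φ (Set.Icc a b) θ * Dt θ

lemma ContDiffOn.intervalIntegrable_deriv {E : Type*} [NormedAddCommGroup E] [NormedSpace ℝ E]
    {f : ℝ → E} {a b : ℝ}
    (hf : ContDiffOn ℝ 1 f (Icc a b)) (hab : a < b) :
    IntervalIntegrable (deriv f) volume a b := by
  refine ((hf.continuousOn_derivWithin (uniqueDiffOn_Icc hab) le_rfl).intervalIntegrable_of_Icc
    hab.le).congr_uIoo fun x hx => ?_
  rw [uIoo_of_le hab.le] at hx
  exact derivWithin_of_mem_nhds (Icc_mem_nhds hx.1 hx.2)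

lemma Fin.sum_filter_succ_sub_castSucc {M : Type*} [AddCommGroup M] {q : ℕ}
    (f : Fin (q + 1) → M) {a b : Fin (q + 1)} (hab : a ≤ b) :
    ∑ l : Fin q with a ≤ l.castSucc ∧ l.succ ≤ b, (f l.succ - f l.castSucc) = f b - f a := by
  set F : ℕ → M := fun n => f (Fin.clamp n q)
  have hF : ∀ i : Fin (q + 1), f i = F i := fun i =>
    congrArg f (Fin.ext (by simp [Fin.clamp, Nat.le_of_lt_succ i.is_lt]))
  have hIco : Finset.range q ∩ Finset.Ico (a : ℕ) b = Finset.Ico (a : ℕ) b :=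
    Finset.inter_eq_right.mpr fun n hn => Finset.mem_range.mpr
      ((Finset.mem_Ico.mp hn).2.trans_le (Nat.le_of_lt_succ b.is_lt))
  calc _ = ∑ n ∈ Finset.range q, if n ∈ Finset.Ico (a : ℕ) b then F (n + 1) - F n else 0 := by
        rw [Finset.sum_filter, ← Fin.sum_univ_eq_sum_range]
        refine Finset.sum_congr rfl fun l _ => ?_
        rw [hF l.succ, hF l.castSucc]
        simp only [Fin.le_def, Fin.val_succ, Fin.val_castSucc, Finset.mem_Ico,
          Nat.lt_iff_add_one_le]
    _ = F b - F a := by rw [Finset.sum_ite_mem, hIco, Finset.sum_Ico_sub F (Fin.le_def.mp hab)]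
    _ = f b - f a := by rw [hF, hF]

lemma ContDiffOn.comp_add_const {E : Type*} [NormedAddCommGroup E] [NormedSpace ℝ E]
    {n : WithTop ℕ∞} {f : ℝ → E} {a b c : ℝ} (hf : ContDiffOn ℝ n f (Icc (a + c) (b + c))) :
    ContDiffOn ℝ n (fun θ => f (θ + c)) (Icc a b) :=
  hf.comp (contDiff_id.add contDiff_const).contDiffOn fun _ hθ =>
    ⟨add_le_add_left hθ.1 c, add_le_add_left hθ.2 c⟩

section Lam

variable {Dt : ℝ → ℂ} {a b : ℝ} {χ : ℝ → ℂ}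

lemma Lam_eq_integral_deriv (hab : a ≤ b) :
    Lam Dt a b χ = χ b * Dt b - χ a * Dt a - ∫ θ in a..b, deriv χ θ * Dt θ := by
  rw [Lam, intervalIntegral.integral_congr_Ioo_of_le hab fun θ hθ => by
    rw [derivWithin_of_mem_nhds (Icc_mem_nhds hθ.1 hθ.2)]]

lemma exists_Lam_eq_sub (hDt : Continuous Dt) {c d : ℝ} (hcd : c < d)
    (hχ : ContDiffOn ℝ 1 χ (Icc c d)) :
    ∃ F : ℝ → ℂ, ∀ a b, c ≤ a → a ≤ b → b ≤ d → Lam Dt a b χ = F b - F a := by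
  have hint := (hχ.intervalIntegrable_deriv hcd).mul_continuousOn (g := Dt) hDt.continuousOn
  have hint' : ∀ x, c ≤ x → x ≤ d →
      IntervalIntegrable (fun t => deriv χ t * Dt t) volume c x := fun x hcx hxd =>
    hint.mono_set (uIcc_subset_uIcc_left (mem_uIcc_of_le hcx hxd))
  refine ⟨fun x => χ x * Dt x - ∫ t in c..x, deriv χ t * Dt t, fun a b hca hab hbd => ?_⟩
  rw [Lam_eq_integral_deriv hab, ← intervalIntegral.integral_interval_sub_left
    (hint' b (hca.trans hab) hbd) (hint' a hca (hab.trans hbd))]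
  ring

lemma Lam_finset_sum (hDt : Continuous Dt) (hab : a < b) {ι : Type*} (S : Finset ι)
    {F : ι → ℝ → ℂ} (hF : ∀ k ∈ S, ContDiffOn ℝ 1 (F k) (Icc a b)) :
    Lam Dt a b (fun θ => ∑ k ∈ S, F k θ) = ∑ k ∈ S, Lam Dt a b (F k) := by
  have hderiv : EqOn (fun θ => deriv (fun θ => ∑ k ∈ S, F k θ) θ * Dt θ)
      (fun θ => ∑ k ∈ S, deriv (F k) θ * Dt θ) (Ioo a b) := fun θ hθ => by
    dsimp only
    rw [deriv_fun_sum fun k hk => (hF k hk).differentiableOn one_ne_zero θ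
      (Ioo_subset_Icc_self hθ) |>.differentiableAt (Icc_mem_nhds hθ.1 hθ.2), Finset.sum_mul]
  simp only [Lam_eq_integral_deriv hab.le, intervalIntegral.integral_congr_Ioo_of_le hab.le
    hderiv, intervalIntegral.integral_finsetSum fun k hk =>
      ((hF k hk).intervalIntegrable_deriv hab).mul_continuousOn hDt.continuousOn,
    Finset.sum_mul, Finset.sum_sub_distrib]

lemma Lam_comp_add_const (hDt : Continuous Dt) (hab : a < b) {c : ℝ} {K : ℂ}
    (hshift : ∀ θ, Dt (θ + c) = Dt θ + K) (hχ : ContDiffOn ℝ 1 χ (Icc (a + c) (b + c))) :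
    Lam Dt a b (fun θ => χ (θ + c)) = Lam Dt (a + c) (b + c) χ := by
  have habc : a + c < b + c := by linarith
  have hint : ∫ θ in a..b, deriv (fun θ => χ (θ + c)) θ * Dt θ
      = (∫ θ in (a + c)..(b + c), deriv χ θ * Dt θ) - (χ (b + c) - χ (a + c)) * K := by
    have hintegrand : (fun θ => deriv (fun θ => χ (θ + c)) θ * Dt θ)
        = fun θ => (fun u => deriv χ u * Dt u - deriv χ u * K) (θ + c) := by
      ext θ
      rw [deriv_comp_add_const]
      dsimp only
      rw [hshift]
      ring
    rw [hintegrand,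
      intervalIntegral.integral_comp_add_right (fun u => deriv χ u * Dt u - deriv χ u * K),
      intervalIntegral.integral_sub
        ((hχ.intervalIntegrable_deriv habc).mul_continuousOn hDt.continuousOn)
        ((hχ.intervalIntegrable_deriv habc).mul_const K),
      intervalIntegral.integral_mul_const,
      intervalIntegral.integral_deriv_of_contDiffOn_Icc hχ habc.le]
  rw [Lam_eq_integral_deriv hab.le, Lam_eq_integral_deriv habc.le, hint, hshift, hshift]
  ring

end Lam

lemma sum_Lam_partition {Dt χ : ℝ → ℂ} (hDt : Continuous Dt) {q : ℕ} {P : Fin (q + 1) → ℝ}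
    (hP : StrictMono P) {a b : Fin (q + 1)} (hab : a < b)
    (hχ : ContDiffOn ℝ 1 χ (Icc (P a) (P b))) :
    ∑ l : Fin q with a ≤ l.castSucc ∧ l.succ ≤ b, Lam Dt (P l.castSucc) (P l.succ) χ
      = Lam Dt (P a) (P b) χ := by
  obtain ⟨F, hF⟩ := exists_Lam_eq_sub hDt (hP hab) hχ
  rw [hF _ _ le_rfl (hP hab).le le_rfl,
    ← Fin.sum_filter_succ_sub_castSucc (fun i => F (P i)) hab.le]
  refine Finset.sum_congr rfl fun l hl => ?_
  obtain ⟨hal, hlb⟩ := (Finset.mem_filter.mp hl).2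
  exact hF _ _ (hP.monotone hal) (hP Fin.castSucc_lt_succ).le (hP.monotone hlb)

lemma sum_Lam_transfer {Dt : ℝ → ℂ} (hDt : Continuous Dt) {q : ℕ} {P : Fin (q + 1) → ℝ}
    (hP : StrictMono P) {aIdx bIdx : Fin q → Fin (q + 1)} (hIdx : ∀ k, aIdx k < bIdx k)
    {c : Fin q → ℝ} {K : Fin q → ℂ} (hshift : ∀ k θ, Dt (θ + c k) = Dt θ + K k)
    {χ : Fin q → ℝ → ℂ}
    (hχ : ∀ k, ContDiffOn ℝ 1 (χ k) (Icc (P (aIdx k) + c k) (P (bIdx k) + c k))) :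
    ∑ l : Fin q, Lam Dt (P l.castSucc) (P l.succ)
        (fun θ => ∑ k : Fin q with aIdx k ≤ l.castSucc ∧ l.succ ≤ bIdx k, χ k (θ + c k))
      = ∑ k : Fin q, Lam Dt (P (aIdx k) + c k) (P (bIdx k) + c k) (χ k) := by
  have hχ_sub : ∀ k (l : Fin q), aIdx k ≤ l.castSucc ∧ l.succ ≤ bIdx k →
      ContDiffOn ℝ 1 (χ k) (Icc (P l.castSucc + c k) (P l.succ + c k)) := fun k l ⟨hal, hlb⟩ =>
    (hχ k).mono (Icc_subset_Icc (add_le_add_left (hP.monotone hal) _)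
      (add_le_add_left (hP.monotone hlb) _))
  calc _ = ∑ l : Fin q, ∑ k : Fin q with aIdx k ≤ l.castSucc ∧ l.succ ≤ bIdx k,
          Lam Dt (P l.castSucc + c k) (P l.succ + c k) (χ k) := by
        refine Finset.sum_congr rfl fun l _ => ?_
        rw [Lam_finset_sum hDt (hP Fin.castSucc_lt_succ) _ fun k hk =>
          (hχ_sub k l (Finset.mem_filter.mp hk).2).comp_add_const]
        refine Finset.sum_congr rfl fun k hk => ?_
        exact Lam_comp_add_const hDt (hP Fin.castSucc_lt_succ) (hshift k)
          (hχ_sub k l (Finset.mem_filter.mp hk).2)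
    _ = ∑ k : Fin q, ∑ l : Fin q with aIdx k ≤ l.castSucc ∧ l.succ ≤ bIdx k,
          Lam Dt (P l.castSucc + c k) (P l.succ + c k) (χ k) := by
        simp only [Finset.sum_filter]
        exact Finset.sum_comm
    _ = _ := Finset.sum_congr rfl fun k _ =>
        sum_Lam_partition (P := fun i => P i + c k) hDt
          (fun i j hij => add_lt_add_left (hP hij) _) (hIdx k) (hχ k)

lemma ContDiff.ofReal_cpow_const {n : WithTop ℕ∞} {f : ℝ → ℝ} (hf : ContDiff ℝ n f)
    (hpos : ∀ x, 0 < f x) (c : ℂ) : ContDiff ℝ n fun x => ((f x : ℝ) : ℂ) ^ c := by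
  have hexp : (fun x => ((f x : ℝ) : ℂ) ^ c) = fun x => cexp ((Real.log (f x) : ℂ) * c) := by
    ext x
    rw [cpow_def_of_ne_zero (ofReal_ne_zero.mpr (hpos x).ne'), ofReal_log (hpos x).le]
  rw [hexp]
  exact ((ofRealCLM.contDiff.comp (hf.log fun x => (hpos x).ne')).mul contDiff_const).cexp

lemma strictMono_contDiff_of_leftInverse {g δ u : ℝ → ℝ} (hg : ∀ x, HasDerivAt g (u x) x)
    (hu : Continuous u) (hu0 : ∀ x, 0 < u x) (hgδ : Function.LeftInverse g δ)
    (hδg : Function.LeftInverse δ g) : StrictMono δ ∧ ContDiff ℝ 1 δ := by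
  have hg_mono : StrictMono g := strictMono_of_deriv_pos fun x => (hg x).deriv ▸ hu0 x
  have hδ_mono : StrictMono δ := fun x y hxy => by
    rwa [← hg_mono.lt_iff_lt, hgδ x, hgδ y]
  have hδ_cont : Continuous δ := hδ_mono.monotone.continuous_of_surjective hδg.surjective
  have hδ' : ∀ y, HasDerivAt δ (u (δ y))⁻¹ y := fun y =>
    (hg (δ y)).of_local_left_inverse hδ_cont.continuousAt (hu0 _).ne' (.of_forall hgδ)
  refine ⟨hδ_mono, contDiff_one_iff_deriv.mpr ⟨fun y => (hδ' y).differentiableAt, ?_⟩⟩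
  rw [funext fun y => (hδ' y).deriv]
  exact (hu.comp hδ_cont).inv₀ fun y => (hu0 _).ne'

lemma contDiffOn_comp_leftInverse_mul_deriv_cpow {g δ u : ℝ → ℝ}
    (hg : ∀ x, HasDerivAt g (u x) x) (hu : ContDiff ℝ 1 u) (hu0 : ∀ x, 0 < u x)
    (hgδ : Function.LeftInverse g δ) (hδg : Function.LeftInverse δ g) (s : ℂ) {φ : ℝ → ℂ}
    {a b : ℝ} (hφ : ContDiffOn ℝ 1 φ (Icc a b)) :
    ContDiffOn ℝ 1 (fun t => φ (δ t) * ((deriv g (δ t) : ℝ) : ℂ) ^ (-s)) (Icc (g a) (g b)) := by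
  obtain ⟨hδ_mono, hδ⟩ := strictMono_contDiff_of_leftInverse hg hu.continuous hu0 hgδ hδg
  have hmaps : MapsTo δ (Icc (g a) (g b)) (Icc a b) := fun y hy =>
    ⟨hδg a ▸ hδ_mono.monotone hy.1, hδg b ▸ hδ_mono.monotone hy.2⟩
  rw [funext fun x => (hg x).deriv]
  exact (hφ.comp hδ.contDiffOn hmaps).mul
    ((hu.comp hδ).ofReal_cpow_const (fun t => hu0 (δ t)) (-s)).contDiffOn

lemma eq_of_cexp_ofReal_mul_I_eq {X : Type*} [TopologicalSpace X] [PreconnectedSpace X]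
    {f g : X → ℝ} (hf : Continuous f) (hg : Continuous g)
    (h : ∀ x, cexp (f x * I) = cexp (g x * I)) {x₀ : X} (h₀ : f x₀ = g x₀) : f = g := by
  have hlift := isCoveringMap_exp.eq_of_comp_eq (g₁ := fun x => (f x : ℂ) * I)
    (g₂ := fun x => (g x : ℂ) * I) (by fun_prop) (by fun_prop)
    (funext fun x => Subtype.ext (h x)) x₀ (by rw [h₀])
  funext x
  exact_mod_cast mul_right_cancel₀ I_ne_zero (congrFun hlift x)

section Mobius

variable {A B : ℂ}

/-- `|γ'(e^{iθ})|` for the disk automorphism `γ(z) = (Az + B)/(B̄z + Ā)`. -/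
def mobiusCircleDeriv (A B : ℂ) (θ : ℝ) : ℝ :=
  (normSq (conj B * cexp (θ * I) + conj A))⁻¹

lemma mobius_den_ne_zero (hAB : ‖A‖ ^ 2 - ‖B‖ ^ 2 = 1) (θ : ℝ) :
    conj B * cexp (θ * I) + conj A ≠ 0 := by
  intro h
  have hnorm : ‖A‖ = ‖B‖ := by
    simpa [norm_exp_ofReal_mul_I] using congrArg norm (eq_neg_of_add_eq_zero_right h)
  simp [hnorm] at hAB

lemma mobiusCircleDeriv_pos (hAB : ‖A‖ ^ 2 - ‖B‖ ^ 2 = 1) (θ : ℝ) :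
    0 < mobiusCircleDeriv A B θ :=
  inv_pos.mpr (normSq_pos.mpr (mobius_den_ne_zero hAB θ))

lemma contDiff_mobiusCircleDeriv (hAB : ‖A‖ ^ 2 - ‖B‖ ^ 2 = 1) {n : WithTop ℕ∞} :
    ContDiff ℝ n (mobiusCircleDeriv A B) := by
  have hden : ContDiff ℝ n fun θ : ℝ => conj B * cexp (θ * I) + conj A :=
    (contDiff_const.mul (ofRealCLM.contDiff.mul contDiff_const).cexp).add contDiff_const
  unfold mobiusCircleDeriv
  simp only [normSq_eq_norm_sq]
  exact ((contDiff_norm_sq ℝ).comp hden).inv fun θ =>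
    pow_ne_zero 2 (norm_ne_zero_iff.mpr (mobius_den_ne_zero hAB θ))

lemma hasDerivAt_mobius_circle (hAB : ‖A‖ ^ 2 - ‖B‖ ^ 2 = 1) (θ : ℝ) :
    HasDerivAt (fun θ : ℝ => (A * cexp (θ * I) + B) / (conj B * cexp (θ * I) + conj A))
      (I * mobiusCircleDeriv A B θ *
        ((A * cexp (θ * I) + B) / (conj B * cexp (θ * I) + conj A))) θ := by
  have he : HasDerivAt (fun θ : ℝ => cexp (θ * I)) (cexp (θ * I) * I) θ := by
    simpa using ((hasDerivAt_id θ).ofReal_comp.mul_const I).cexp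
  have hden := mobius_den_ne_zero hAB θ
  refine ((he.const_mul A).add_const B).div ((he.const_mul (conj B)).add_const (conj A)) hden
    |>.congr_deriv ?_
  rw [mobiusCircleDeriv]
  set e := cexp (θ * I)
  set D := conj B * e + conj A
  have hee : e * conj e = 1 := by
    rw [mul_conj, normSq_eq_norm_sq, norm_exp_ofReal_mul_I]; simp
  have hdet : A * conj A - conj B * B = 1 := by
    rw [mul_comm (conj B), mul_conj, mul_conj, normSq_eq_norm_sq, normSq_eq_norm_sq]
    exact_mod_cast hAB
  have hnum : A * (e * I) * D - (A * e + B) * (conj B * (e * I)) = e * I := by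
    linear_combination (e * I) * hdet
  have hconj : e * conj D = A * e + B := by
    simp only [D, map_add, map_mul, conj_conj]
    linear_combination B * hee
  have hcD : conj D ≠ 0 := (map_ne_zero _).mpr hden
  rw [ofReal_inv, ← mul_conj, hnum, ← hconj]
  field_simp

lemma hasDerivAt_of_cexp_mul_I_eq_mobius (hAB : ‖A‖ ^ 2 - ‖B‖ ^ 2 = 1) {g : ℝ → ℝ}
    (hg : Continuous g) (hlift : ∀ θ : ℝ, cexp (g θ * I)
      = (A * cexp (θ * I) + B) / (conj B * cexp (θ * I) + conj A)) (θ : ℝ) :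
    HasDerivAt g (mobiusCircleDeriv A B θ) θ := by
  set M : ℝ → ℂ := fun θ => (A * cexp (θ * I) + B) / (conj B * cexp (θ * I) + conj A)
  have hu : Continuous (mobiusCircleDeriv A B) :=
    (contDiff_mobiusCircleDeriv hAB (n := 0)).continuous
  set G : ℝ → ℝ := fun θ => g 0 + ∫ t in (0 : ℝ)..θ, mobiusCircleDeriv A B t
  have hG : ∀ θ, HasDerivAt G (mobiusCircleDeriv A B θ) θ := fun θ =>
    (hu.integral_hasStrictDerivAt 0 θ).hasDerivAt.const_add (g 0)
  -- `exp(-iG) · M` has derivative zero, and equals `1` at `0`.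
  have hGM : ∀ θ, cexp (G θ * I) = M θ := by
    have hderiv : ∀ θ, HasDerivAt (fun θ => cexp (-(G θ * I)) * M θ) 0 θ := fun θ => by
      refine ((hG θ).ofReal_comp.mul_const I).neg.cexp.mul (hasDerivAt_mobius_circle hAB θ)
        |>.congr_deriv ?_
      ring
    intro θ
    rw [← inv_mul_eq_one₀ (Complex.exp_ne_zero _), ← Complex.exp_neg,
      is_const_of_deriv_eq_zero (fun θ => (hderiv θ).differentiableAt)
      (fun θ => (hderiv θ).deriv) θ 0]
    simp only [M, ← hlift 0, ← Complex.exp_add]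
    simp [G]
  have hgG : g = G := by
    refine eq_of_cexp_ofReal_mul_I_eq hg
      (continuous_iff_continuousAt.mpr fun θ => (hG θ).continuousAt) (fun θ => ?_)
      (x₀ := 0) (by simp [G])
    rw [hlift, hGM]
  rw [hgG]
  exact hG θ

end Mobius

theorem stmt6_general (s : ℂ)
    (Dt : ℝ → ℂ) (hDt_cont : Continuous Dt)
    (hDt_ext : ∀ θ : ℝ, Dt (θ + 2 * π) = Dt θ + Dt (2 * π))
    -- the Markov partition 0 = θ₀ < θ₁ < ⋯ < θ_q = 2π
    (q : ℕ)
    (P : Fin (q + 1) → ℝ) (hP_mono : StrictMono P)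
    (hP0 : P 0 = 0) (hPlast : P (Fin.last q) = 2 * π)
    -- the Möbius branches γ_k with lifts `g k` and inverse lifts `δ k`
    (A B : Fin q → ℂ) (hAB : ∀ k, ‖A k‖ ^ 2 - ‖B k‖ ^ 2 = 1)
    (g : Fin q → ℝ → ℝ)
    (hg_cont : ∀ k, Continuous (g k))
    (hg_lift : ∀ k (θ : ℝ), Complex.exp (g k θ * Complex.I)
      = (A k * Complex.exp (θ * Complex.I) + B k) /
        (conj (B k) * Complex.exp (θ * Complex.I) + conj (A k)))
    (δ : Fin q → ℝ → ℝ) (hδ : ∀ k (θ : ℝ), g k (δ k θ) = θ ∧ δ k (g k θ) = θ)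
    -- the Markov property: each branch sends partition points to partition points mod 2π
    (m : Fin q → ℤ) (aIdx bIdx : Fin q → Fin (q + 1)) (hIdx : ∀ k, aIdx k < bIdx k)
    (hMarkov_a : ∀ k, g k (P k.castSucc) = P (aIdx k) + 2 * π * (m k : ℝ))
    (hMarkov_b : ∀ k, g k (P k.succ) = P (bIdx k) + 2 * π * (m k : ℝ))
    -- the equivariance of `D̃` under each branch (furnished by Proposition 3)
    (heqv : ∀ k, ∀ a b : ℝ, a ≤ b → b - a ≤ 2 * π →
      ∀ φ : ℝ → ℂ, ContDiffOn ℝ 1 φ (Set.Icc a b) →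
        Lam Dt a b φ = Lam Dt (g k a) (g k b)
          (fun θ => φ (δ k θ) * ((deriv (g k) (δ k θ) : ℝ) : ℂ) ^ (-s))) :
    -- conclusion: ⟨D̃, Lφ⟩ = ⟨D̃, φ⟩ for every piecewise C¹ family φ
    ∀ φ : Fin q → ℝ → ℂ,
      (∀ k, ContDiffOn ℝ 1 (φ k) (Set.Icc (P k.castSucc) (P k.succ))) →
      ∀ Lφ : Fin q → ℝ → ℂ,
        (∀ l (θ : ℝ), Lφ l θ =
          ∑ k ∈ Finset.univ.filter (fun k : Fin q => aIdx k ≤ l.castSucc ∧ l.succ ≤ bIdx k),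
            φ k (δ k (θ + 2 * π * (m k : ℝ))) *
              ((deriv (g k) (δ k (θ + 2 * π * (m k : ℝ))) : ℝ) : ℂ) ^ (-s)) →
        ∑ l : Fin q, Lam Dt (P l.castSucc) (P l.succ) (Lφ l)
          = ∑ k : Fin q, Lam Dt (P k.castSucc) (P k.succ) (φ k) := by
  intro φ hφ Lφ hLφ
  have hshift : ∀ k θ, Dt (θ + 2 * π * m k) = Dt θ + m k • Dt (2 * π) := fun k θ => by
    simpa [zsmul_eq_mul, mul_comm] using
      AddConstMapClass.map_add_zsmul (⟨Dt, hDt_ext⟩ : AddConstMap ℝ ℂ (2 * π) (Dt (2 * π))) θ (m k)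
  have hχ : ∀ k, ContDiffOn ℝ 1 (fun t => φ k (δ k t) * ((deriv (g k) (δ k t) : ℝ) : ℂ) ^ (-s))
      (Icc (P (aIdx k) + 2 * π * m k) (P (bIdx k) + 2 * π * m k)) := fun k => by
    rw [← hMarkov_a, ← hMarkov_b]
    exact contDiffOn_comp_leftInverse_mul_deriv_cpow
      (hasDerivAt_of_cexp_mul_I_eq_mobius (hAB k) (hg_cont k) (hg_lift k))
      (contDiff_mobiusCircleDeriv (hAB k)) (mobiusCircleDeriv_pos (hAB k))
      (fun θ => (hδ k θ).1) (fun θ => (hδ k θ).2) s (hφ k)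
  rw [funext fun l => funext (hLφ l), sum_Lam_transfer hDt_cont hP_mono hIdx hshift hχ]
  refine Finset.sum_congr rfl fun k _ => ?_
  have hlen : P k.succ - P k.castSucc ≤ 2 * π := by
    linarith [hP_mono.monotone (Fin.le_last k.succ), hP_mono.monotone (Fin.zero_le k.castSucc)]
  rw [← hMarkov_a, ← hMarkov_b]
  exact (heqv k _ _ (hP_mono Fin.castSucc_lt_succ).le hlen (φ k) (hφ k)).symm

/-- Proposition 4 of the paper: a continuous primitive `D̃` that is `s`-equivariant under each
Möbius branch of a piecewise Möbius Markov map of the circle is a fixed point of the dual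
Ruelle transfer operator: `⟨D, Lφ⟩ = ⟨D, φ⟩`. -/
theorem stmt6 (s : ℂ)
    (Dt : ℝ → ℂ) (hDt_cont : Continuous Dt) (hDt_zero : Dt 0 = 0)
    (hDt_ext : ∀ θ : ℝ, Dt (θ + 2 * π) = Dt θ + Dt (2 * π))
    -- the Markov partition 0 = θ₀ < θ₁ < ⋯ < θ_q = 2π
    (q : ℕ) (hq : 0 < q)
    (P : Fin (q + 1) → ℝ) (hP_mono : StrictMono P)
    (hP0 : P 0 = 0) (hPlast : P (Fin.last q) = 2 * π)
    -- the Möbius branches γ_k with lifts `g k` and inverse lifts `δ k`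
    (A B : Fin q → ℂ) (hAB : ∀ k, ‖A k‖ ^ 2 - ‖B k‖ ^ 2 = 1)
    (g : Fin q → ℝ → ℝ)
    (hg_cont : ∀ k, Continuous (g k)) (hg_mono : ∀ k, StrictMono (g k))
    (hg_lift : ∀ k (θ : ℝ), Complex.exp (g k θ * Complex.I)
      = (A k * Complex.exp (θ * Complex.I) + B k) /
        (conj (B k) * Complex.exp (θ * Complex.I) + conj (A k)))
    (hg_per : ∀ k (θ : ℝ), g k (θ + 2 * π) = g k θ + 2 * π)
    (δ : Fin q → ℝ → ℝ) (hδ : ∀ k (θ : ℝ), g k (δ k θ) = θ ∧ δ k (g k θ) = θ)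
    -- the Markov property: each branch sends partition points to partition points mod 2π
    (m : Fin q → ℤ) (aIdx bIdx : Fin q → Fin (q + 1)) (hIdx : ∀ k, aIdx k < bIdx k)
    (hMarkov_a : ∀ k, g k (P k.castSucc) = P (aIdx k) + 2 * π * (m k : ℝ))
    (hMarkov_b : ∀ k, g k (P k.succ) = P (bIdx k) + 2 * π * (m k : ℝ))
    -- the equivariance of `D̃` under each branch (furnished by Proposition 3)
    (heqv : ∀ k, ∀ a b : ℝ, a ≤ b → b - a ≤ 2 * π →
      ∀ φ : ℝ → ℂ, ContDiffOn ℝ 1 φ (Set.Icc a b) →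
        Lam Dt a b φ = Lam Dt (g k a) (g k b)
          (fun θ => φ (δ k θ) * ((deriv (g k) (δ k θ) : ℝ) : ℂ) ^ (-s))) :
    -- conclusion: ⟨D̃, Lφ⟩ = ⟨D̃, φ⟩ for every piecewise C¹ family φ
    ∀ φ : Fin q → ℝ → ℂ,
      (∀ k, ContDiffOn ℝ 1 (φ k) (Set.Icc (P k.castSucc) (P k.succ))) →
      ∀ Lφ : Fin q → ℝ → ℂ,
        (∀ l (θ : ℝ), Lφ l θ =
          ∑ k ∈ Finset.univ.filter (fun k : Fin q => aIdx k ≤ l.castSucc ∧ l.succ ≤ bIdx k),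
            φ k (δ k (θ + 2 * π * (m k : ℝ))) *
              ((deriv (g k) (δ k (θ + 2 * π * (m k : ℝ))) : ℝ) : ℂ) ^ (-s)) →
        ∑ l : Fin q, Lam Dt (P l.castSucc) (P l.succ) (Lφ l)
          = ∑ k : Fin q, Lam Dt (P k.castSucc) (P k.succ) (φ k) :=
  stmt6_general s Dt hDt_cont hDt_ext q P hP_mono hP0 hPlast A B hAB g hg_cont hg_lift δ hδ m aIdx
    bIdx hIdx hMarkov_a hMarkov_b heqv
end
end

section
/- Let ξ and η be distinct points of the unit circle in ℂ, and let m(z) = (az + b)/(b̄z + ā), with a, b ∈ ℂ and |a|² − |b|² = 1, be a Möbius automorphism of the unit disk whose boundary extension satisfies m(1) = ξ and m(−1) = η. Then for every x ∈ (−1,1), writing z = m(x): (|z − ξ|²·|z − η|²)/(1 − |z|²)² = |ξ − η|²/4. -/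
open Complex Real Set ComplexConjugate

noncomputable section

/-
The quantity `‖z - u‖² ‖z - v‖² / ((1 - ‖z‖²)² ‖u - v‖²)` is invariant under the disk
automorphisms `m z = (a z + b) / (b̄ z + ā)` with `|a|² - |b|² = 1`: every factor `‖m z - m w‖`
picks up `1 / (|b̄ z + ā| |b̄ w + ā|)` and `1 - ‖m z‖²` picks up `1 / |b̄ z + ā|²`, and these
cancel. On the real diameter with endpoints `±1` the quantity is `(1 - x²)² / ((1 - x²)² · 4)`.
-/

def diskMobius (a b z : ℂ) : ℂ := (a * z + b) / (conj b * z + conj a)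

namespace diskMobius

variable {a b : ℂ}

theorem mul_conj_sub_mul_conj (hab : ‖a‖ ^ 2 - ‖b‖ ^ 2 = 1) : a * conj a - b * conj b = 1 := by
  rw [mul_conj, mul_conj, normSq_eq_norm_sq, normSq_eq_norm_sq]
  exact_mod_cast hab

theorem denom_ne_zero (hab : ‖a‖ ^ 2 - ‖b‖ ^ 2 = 1) {z : ℂ} (hz : ‖z‖ ≤ 1) :
    conj b * z + conj a ≠ 0 := by
  intro h
  have hba : ‖b‖ < ‖a‖ := by nlinarith [norm_nonneg a, norm_nonneg b]
  have hnorm : ‖a‖ = ‖b‖ * ‖z‖ := by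
    rw [← norm_conj a, eq_neg_of_add_eq_zero_right h, norm_neg, norm_mul, norm_conj]
  nlinarith [norm_nonneg b]

theorem sub_eq (hab : ‖a‖ ^ 2 - ‖b‖ ^ 2 = 1) {z w : ℂ}
    (hz : conj b * z + conj a ≠ 0) (hw : conj b * w + conj a ≠ 0) :
    diskMobius a b z - diskMobius a b w
      = (z - w) / ((conj b * z + conj a) * (conj b * w + conj a)) := by
  rw [diskMobius, diskMobius, div_sub_div _ _ hz hw]
  congr 1
  linear_combination (z - w) * mul_conj_sub_mul_conj hab

theorem one_sub_norm_sq (hab : ‖a‖ ^ 2 - ‖b‖ ^ 2 = 1) {z : ℂ} (hz : conj b * z + conj a ≠ 0) :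
    1 - ‖diskMobius a b z‖ ^ 2 = (1 - ‖z‖ ^ 2) / ‖conj b * z + conj a‖ ^ 2 := by
  have hconj : (conj b * z + conj a) * conj (conj b * z + conj a)
      - (a * z + b) * conj (a * z + b) = 1 - z * conj z := by
    simp only [map_add, map_mul, conj_conj]
    linear_combination (1 - z * conj z) * mul_conj_sub_mul_conj hab
  simp only [mul_conj, normSq_eq_norm_sq] at hconj
  have hreal : ‖conj b * z + conj a‖ ^ 2 - ‖a * z + b‖ ^ 2 = 1 - ‖z‖ ^ 2 := by
    exact_mod_cast hconj
  rw [diskMobius, norm_div, div_pow, ← hreal]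
  have hz' := norm_ne_zero_iff.mpr hz
  generalize ‖conj b * z + conj a‖ = p at *
  field_simp

theorem gromov_ratio_invariant (hab : ‖a‖ ^ 2 - ‖b‖ ^ 2 = 1) {z u v : ℂ}
    (hz : ‖z‖ ≤ 1) (hu : ‖u‖ ≤ 1) (hv : ‖v‖ ≤ 1) :
    ‖diskMobius a b z - diskMobius a b u‖ ^ 2 * ‖diskMobius a b z - diskMobius a b v‖ ^ 2
        / (1 - ‖diskMobius a b z‖ ^ 2) ^ 2 * ‖u - v‖ ^ 2
      = ‖z - u‖ ^ 2 * ‖z - v‖ ^ 2 / (1 - ‖z‖ ^ 2) ^ 2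
        * ‖diskMobius a b u - diskMobius a b v‖ ^ 2 := by
  have hdz := denom_ne_zero hab hz
  have hdu := denom_ne_zero hab hu
  have hdv := denom_ne_zero hab hv
  rw [sub_eq hab hdz hdu, sub_eq hab hdz hdv, sub_eq hab hdu hdv, one_sub_norm_sq hab hdz]
  simp only [norm_div, norm_mul]
  have hz' := norm_ne_zero_iff.mpr hdz
  have hu' := norm_ne_zero_iff.mpr hdu
  have hv' := norm_ne_zero_iff.mpr hdv
  generalize ‖conj b * z + conj a‖ = p at *
  generalize ‖conj b * u + conj a‖ = q at *
  generalize ‖conj b * v + conj a‖ = r at *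
  field_simp

end diskMobius

theorem norm_ofReal_sub_one_sq_mul (x : ℝ) :
    ‖(x : ℂ) - 1‖ ^ 2 * ‖(x : ℂ) - (-1)‖ ^ 2 = (1 - ‖(x : ℂ)‖ ^ 2) ^ 2 := by
  rw [← ofReal_one, ← ofReal_neg, ← ofReal_sub, ← ofReal_sub]
  simp only [norm_real, norm_eq_abs, sq_abs]
  ring

theorem stmt7_general (ξ η : ℂ)
    (a b : ℂ) (hab : ‖a‖ ^ 2 - ‖b‖ ^ 2 = 1)
    (m : ℂ → ℂ) (hm : m = fun z => (a * z + b) / (conj b * z + conj a))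
    (hm1 : m 1 = ξ) (hm2 : m (-1) = η) :
    ∀ x : ℝ, -1 < x → x < 1 →
      ‖m x - ξ‖ ^ 2 * ‖m x - η‖ ^ 2 /
          (1 - ‖m x‖ ^ 2) ^ 2
        = ‖ξ - η‖ ^ 2 / 4 := by
  intro x hx1 hx2
  obtain rfl : m = diskMobius a b := hm
  have hx : ‖(x : ℂ)‖ ≤ 1 := by rw [norm_real, norm_eq_abs, abs_le]; constructor <;> linarith
  have hinv := diskMobius.gromov_ratio_invariant hab hx (norm_one (α := ℂ).le)
    (by rw [norm_neg, norm_one])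
  have hdiam : (1 - ‖(x : ℂ)‖ ^ 2) ^ 2 ≠ 0 := by
    rw [norm_real, norm_eq_abs, sq_abs]
    exact pow_ne_zero 2 (by nlinarith)
  rw [hm1, hm2, norm_ofReal_sub_one_sq_mul, div_self hdiam, one_mul] at hinv
  norm_num at hinv
  linarith

/-- Lemma 8 of the paper (geometric form): for `z = m(x)` on the hyperbolic geodesic with
endpoints `ξ = m(1)`, `η = m(−1)` at infinity,
`|z−ξ|²·|z−η|²/(1−|z|²)² = |ξ−η|²/4` (the squared Gromov distance based at the origin). -/
theorem stmt7 (ξ η : ℂ) (hξ : ‖ξ‖ = 1) (hη : ‖η‖ = 1) (hne : ξ ≠ η)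
    (a b : ℂ) (hab : ‖a‖ ^ 2 - ‖b‖ ^ 2 = 1)
    (m : ℂ → ℂ) (hm : m = fun z => (a * z + b) / (conj b * z + conj a))
    (hm1 : m 1 = ξ) (hm2 : m (-1) = η) :
    ∀ x : ℝ, -1 < x → x < 1 →
      ‖m x - ξ‖ ^ 2 * ‖m x - η‖ ^ 2 /
          (1 - ‖m x‖ ^ 2) ^ 2
        = ‖ξ - η‖ ^ 2 / 4 :=
  stmt7_general ξ η a b hab m hm hm1 hm2
end
end

section
/- Let γ(z) = (az + b)/(b̄z + ā), with a, b ∈ ℂ and |a|² − |b|² = 1, be a Möbius automorphism of the unit disk, and let d(0,z) = log((1+|z|)/(1−|z|)) be the hyperbolic distance from the origin. Then for every z in the open unit disk: exp( d(0,z) − d(0, γ^{−1}(z)) ) = (1+|z|)² / ( (1+|γ^{−1}(z)|)² · |γ'(γ^{−1}(z))| ). Moreover the right-hand side extends continuously to the closed unit disk, and its value at a boundary point ξ (|ξ| = 1) equals 1/|γ'(γ^{−1}(ξ))|. -/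
open Complex Real Set ComplexConjugate

noncomputable section

/-! Write `D z = −b̄z + a`. The polynomial identity `|D z|² − |āz − b|² = (|a|² − |b|²)(1 − |z|²)`
gives `|D z|² (1 − |γ⁻¹z|²) = 1 − |z|²`, and `|a|² − |b|² = 1` gives `b̄ γ⁻¹z + ā = 1 / D z`, so
`|γ'(γ⁻¹z)| = |D z|²`. Since `|b| < |a|`, `D` has no zero on the closed disk, which makes the
right-hand side continuous there; on the unit circle `|γ⁻¹ξ| = 1` and it reduces to `|D ξ|²`. -/

/-- `γ⁻¹` for the disk automorphism `γ z = (az + b)/(b̄z + ā)`. -/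
def diskAutInv (a b z : ℂ) : ℂ := (conj a * z - b) / (-(conj b) * z + a)

lemma norm_sq_sub_norm_sq_mobius (a b z : ℂ) :
    ‖-(conj b) * z + a‖ ^ 2 - ‖conj a * z - b‖ ^ 2 = (‖a‖ ^ 2 - ‖b‖ ^ 2) * (1 - ‖z‖ ^ 2) := by
  simp only [Complex.sq_norm, Complex.normSq_apply, Complex.add_re, Complex.add_im,
    Complex.sub_re, Complex.sub_im, Complex.mul_re, Complex.mul_im, Complex.neg_re,
    Complex.neg_im, Complex.conj_re, Complex.conj_im]
  ring

lemma div_div_one_add_div_one_sub_eq {A W d : ℝ} (hA : A < 1) (hW : W < 1)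
    (hW0 : 0 ≤ W) (hd : 0 < d) (hrel : d ^ 2 * (1 - W ^ 2) = 1 - A ^ 2) :
    (1 + A) / (1 - A) / ((1 + W) / (1 - W)) = (1 + A) ^ 2 / ((1 + W) ^ 2 * d ^ 2) := by
  have h1A : 0 < 1 - A := by linarith
  have h1W : 0 < 1 - W := by linarith
  rw [div_div_div_eq, div_eq_div_iff (by positivity) (by positivity)]
  linear_combination (1 + A) * (1 + W) * hrel

section DiskAutomorphism

variable {a b : ℂ} (hab : ‖a‖ ^ 2 - ‖b‖ ^ 2 = 1)
include hab

lemma mobius_denom_ne_zero {z : ℂ} (hz : ‖z‖ ≤ 1) : -(conj b) * z + a ≠ 0 := by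
  intro h0
  have h : ‖a‖ = ‖b‖ * ‖z‖ := by
    rw [show a = conj b * z by linear_combination h0, norm_mul, Complex.norm_conj]
  have hle : ‖a‖ ≤ ‖b‖ := h ▸ mul_le_of_le_one_right (norm_nonneg b) hz
  nlinarith [norm_nonneg a]

lemma conj_mul_diskAutInv_add {z : ℂ} (hz : ‖z‖ ≤ 1) :
    conj b * diskAutInv a b z + conj a = (-(conj b) * z + a)⁻¹ := by
  have hC : a * conj a - b * conj b = 1 := by
    simp only [Complex.mul_conj, ← Complex.ofReal_sub, Complex.normSq_eq_norm_sq, hab,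
      Complex.ofReal_one]
  have hD := mobius_denom_ne_zero hab hz
  rw [diskAutInv, mul_div_assoc', div_add' _ _ _ hD, ← one_div]
  congr 1
  linear_combination hC

lemma norm_conj_mul_diskAutInv_add {z : ℂ} (hz : ‖z‖ ≤ 1) :
    ‖conj b * diskAutInv a b z + conj a‖ = ‖-(conj b) * z + a‖⁻¹ := by
  rw [conj_mul_diskAutInv_add hab hz, norm_inv]

lemma sq_norm_mul_one_sub_sq_norm_diskAutInv {z : ℂ} (hz : ‖z‖ ≤ 1) :
    ‖-(conj b) * z + a‖ ^ 2 * (1 - ‖diskAutInv a b z‖ ^ 2) = 1 - ‖z‖ ^ 2 := by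
  have hd : ‖-(conj b) * z + a‖ ≠ 0 := norm_ne_zero_iff.mpr (mobius_denom_ne_zero hab hz)
  have key := norm_sq_sub_norm_sq_mobius a b z
  rw [hab, one_mul] at key
  rw [diskAutInv, norm_div, div_pow, mul_sub, mul_one, mul_div_cancel₀ _ (pow_ne_zero 2 hd)]
  linear_combination key

lemma norm_diskAutInv_lt_one {z : ℂ} (hz : ‖z‖ < 1) : ‖diskAutInv a b z‖ < 1 := by
  have hrel := sq_norm_mul_one_sub_sq_norm_diskAutInv hab hz.le
  have hpos : 0 < ‖-(conj b) * z + a‖ ^ 2 * (1 - ‖diskAutInv a b z‖ ^ 2) :=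
    hrel ▸ sub_pos.2 (pow_lt_one₀ (norm_nonneg z) hz two_ne_zero)
  have hW : 0 < 1 - ‖diskAutInv a b z‖ ^ 2 := pos_of_mul_pos_right hpos (by positivity)
  exact (sq_lt_one_iff₀ (norm_nonneg _)).1 (sub_pos.1 hW)

lemma norm_diskAutInv_eq_one {z : ℂ} (hz : ‖z‖ = 1) : ‖diskAutInv a b z‖ = 1 := by
  have hrel := sq_norm_mul_one_sub_sq_norm_diskAutInv hab hz.le
  rw [hz, one_pow, sub_self, mul_eq_zero, sub_eq_zero] at hrel
  rcases hrel with h | h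
  · exact absurd (pow_eq_zero_iff two_ne_zero |>.mp h)
      (norm_ne_zero_iff.mpr (mobius_denom_ne_zero hab hz.le))
  · exact (pow_eq_one_iff_of_nonneg (norm_nonneg _) two_ne_zero).mp h.symm

lemma norm_conj_mul_diskAutInv_add_pos {z : ℂ} (hz : ‖z‖ ≤ 1) :
    0 < ‖conj b * diskAutInv a b z + conj a‖ := by
  rw [norm_conj_mul_diskAutInv_add hab hz]
  exact inv_pos.2 (norm_pos_iff.2 (mobius_denom_ne_zero hab hz))

lemma continuousOn_diskAutInv : ContinuousOn (diskAutInv a b) (Metric.closedBall 0 1) :=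
  ContinuousOn.div (by fun_prop) (by fun_prop) fun _ hz =>
    mobius_denom_ne_zero hab (mem_closedBall_zero_iff.mp hz)

end DiskAutomorphism

theorem stmt11_general (a b : ℂ) (hab : ‖a‖ ^ 2 - ‖b‖ ^ 2 = 1)
    (γinv : ℂ → ℂ) (hγinv : γinv = fun z => (conj a * z - b) / (-(conj b) * z + a))
    (Ψ : ℂ → ℝ)
    (hΨ : Ψ = fun z => (1 + ‖z‖) ^ 2 /
      ((1 + ‖γinv z‖) ^ 2 * (‖conj b * γinv z + conj a‖ ^ 2)⁻¹)) :
    (∀ z ∈ Metric.ball (0 : ℂ) 1,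
      Real.exp (Real.log ((1 + ‖z‖) / (1 - ‖z‖))
        - Real.log ((1 + ‖γinv z‖) / (1 - ‖γinv z‖))) = Ψ z)
    ∧ ContinuousOn Ψ (Metric.closedBall (0 : ℂ) 1)
    ∧ ∀ ξ : ℂ, ‖ξ‖ = 1 →
        Ψ ξ = ((‖conj b * γinv ξ + conj a‖ ^ 2)⁻¹)⁻¹ := by
  obtain rfl : γinv = diskAutInv a b := hγinv
  subst hΨ
  beta_reduce
  refine ⟨fun z hz => ?_, ?_, fun ξ hξ => ?_⟩
  · rw [mem_ball_zero_iff] at hz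
    have hw := norm_diskAutInv_lt_one hab hz
    rw [Real.exp_sub, Real.exp_log (div_pos (by positivity) (sub_pos.2 hz)),
      Real.exp_log (div_pos (by positivity) (sub_pos.2 hw)),
      norm_conj_mul_diskAutInv_add hab hz.le, inv_pow, inv_inv]
    exact div_div_one_add_div_one_sub_eq hz hw (norm_nonneg _)
      (norm_pos_iff.mpr (mobius_denom_ne_zero hab hz.le))
      (sq_norm_mul_one_sub_sq_norm_diskAutInv hab hz.le)
  · have hcont := continuousOn_diskAutInv hab
    refine ContinuousOn.div (by fun_prop) (ContinuousOn.mul (by fun_prop)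
      (ContinuousOn.inv₀ (by fun_prop) fun z hz => ?_)) fun z hz => ?_
    all_goals
      have := norm_conj_mul_diskAutInv_add_pos hab (mem_closedBall_zero_iff.mp hz)
      positivity
  · rw [hξ, norm_diskAutInv_eq_one hab hξ, div_mul_cancel_left₀ (by norm_num)]

/-- The real-analytic extension claim in the proof of Proposition 3 of the paper. With
`d(0,z) = log((1+|z|)/(1−|z|))`, `γ(z) = (az+b)/(b̄z+ā)`, `γ⁻¹(z) = (āz−b)/(−b̄z+a)` and
`|γ'(w)| = |b̄w+ā|^{−2}`, one has on the open disk
`exp(d(0,z) − d(0,γ⁻¹z)) = (1+|z|)²/((1+|γ⁻¹z|)²·|γ'(γ⁻¹z)|)`;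
the right-hand side is continuous on the closed disk and equals `1/|γ'(γ⁻¹ξ)|` at boundary
points `ξ`. -/
theorem stmt11 (a b : ℂ) (hab : ‖a‖ ^ 2 - ‖b‖ ^ 2 = 1)
    (γ : ℂ → ℂ) (hγ : γ = fun z => (a * z + b) / (conj b * z + conj a))
    (γinv : ℂ → ℂ) (hγinv : γinv = fun z => (conj a * z - b) / (-(conj b) * z + a))
    (Ψ : ℂ → ℝ)
    (hΨ : Ψ = fun z => (1 + ‖z‖) ^ 2 /
      ((1 + ‖γinv z‖) ^ 2 * (‖conj b * γinv z + conj a‖ ^ 2)⁻¹)) :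
    (∀ z ∈ Metric.ball (0 : ℂ) 1,
      Real.exp (Real.log ((1 + ‖z‖) / (1 - ‖z‖))
        - Real.log ((1 + ‖γinv z‖) / (1 - ‖γinv z‖))) = Ψ z)
    ∧ ContinuousOn Ψ (Metric.closedBall (0 : ℂ) 1)
    ∧ ∀ ξ : ℂ, ‖ξ‖ = 1 →
        Ψ ξ = ((‖conj b * γinv ξ + conj a‖ ^ 2)⁻¹)⁻¹ :=
  stmt11_general a b hab γinv hγinv Ψ hΨ
end
end

section
/- Let a < b be real numbers, let D̃ : [a,b] → ℂ be continuous, let k : [a,b] → ℂ be continuously differentiable with k(θ) ≠ 0 for every θ ∈ [a,b], and let Δ ⊆ [a,b] be a dense subset. Suppose that for every β ∈ Δ: k(β)·D̃(β) = k(a)·D̃(a) + ∫_a^β k'(θ)·D̃(θ) dθ. Then D̃ is constant on [a,b]. -/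
/-!
By density of `Δ` and continuity of both sides, the identity `k D̃ = k(a) D̃(a) + ∫ₐ k' D̃` holds on
all of `[a,b]`. Differentiating it gives `(k D̃)' = k' D̃`, so the quotient rule applied to
`D̃ = (k D̃) / k` yields `D̃' = 0`, and `D̃` is constant on the convex set `[a,b]`.
-/

open Set

theorem ContinuousOn.hasDerivWithinAt_integral_Icc {E : Type*} [NormedAddCommGroup E]
    [NormedSpace ℝ E] [CompleteSpace E] {g : ℝ → E} {a b x : ℝ}
    (hg : ContinuousOn g (Icc a b)) (hx : x ∈ Icc a b) :
    HasDerivWithinAt (fun u => ∫ θ in a..u, g θ) (g x) (Icc a b) x := by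
  have : Fact (x ∈ Icc a b) := ⟨hx⟩
  exact intervalIntegral.integral_hasDerivWithinAt_right
    (hg.mono (uIcc_subset_Icc (left_mem_Icc.2 (hx.1.trans hx.2)) hx)).intervalIntegrable
    (hg.stronglyMeasurableAtFilter_nhdsWithin measurableSet_Icc x) (hg x hx)

theorem HasDerivWithinAt.hasDerivWithinAt_zero_of_mul {𝕜 𝕜' : Type*}
    [NontriviallyNormedField 𝕜] [NontriviallyNormedField 𝕜'] [NormedAlgebra 𝕜 𝕜']
    {k D : 𝕜 → 𝕜'} {k' : 𝕜'} {s : Set 𝕜} {x : 𝕜} (hk : HasDerivWithinAt k k' s x)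
    (hkD : HasDerivWithinAt (fun y => k y * D y) (k' * D x) s x)
    (hk0 : ∀ y ∈ s, k y ≠ 0) (hx : x ∈ s) : HasDerivWithinAt D 0 s x := by
  have hquot := hkD.div hk (hk0 x hx)
  rw [show (k' * D x * k x - k x * D x * k') / k x ^ 2 = 0 by ring] at hquot
  exact hquot.congr (fun y hy => (mul_div_cancel_left₀ (D y) (hk0 y hy)).symm)
    (mul_div_cancel_left₀ (D x) (hk0 x hx)).symm

theorem Convex.is_const_of_hasDerivWithinAt_zero {E : Type*} [NormedAddCommGroup E]
    [NormedSpace ℝ E] {f : ℝ → E} {s : Set ℝ} (hs : Convex ℝ s)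
    (hf : ∀ x ∈ s, HasDerivWithinAt f 0 s x) {x y : ℝ} (hx : x ∈ s) (hy : y ∈ s) :
    f x = f y := by
  have h := hs.norm_image_sub_le_of_norm_hasDerivWithin_le (C := 0) hf (fun _ _ => by simp) hy hx
  rw [zero_mul] at h
  exact sub_eq_zero.mp (norm_le_zero_iff.mp h)

/-- The rigidity lemma from the proof of the main theorem: if a continuous `D̃` satisfies
`k(β)·D̃(β) = k(a)·D̃(a) + ∫_a^β k'·D̃` for all `β` in a dense subset of `[a,b]`, where `k` is
`C¹` and nonvanishing on `[a,b]`, then `D̃` is constant on `[a,b]`. -/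
theorem stmt12 (a b : ℝ) (hab : a < b)
    (Dt : ℝ → ℂ) (hDt : ContinuousOn Dt (Icc a b))
    (k : ℝ → ℂ) (hk : ContDiffOn ℝ 1 k (Icc a b))
    (hk0 : ∀ θ ∈ Icc a b, k θ ≠ 0)
    (Δ : Set ℝ) (hΔsub : Δ ⊆ Icc a b) (hΔdense : Icc a b ⊆ closure Δ)
    (hid : ∀ β ∈ Δ, k β * Dt β
      = k a * Dt a + ∫ θ in a..β, derivWithin k (Icc a b) θ * Dt θ) :
    ∀ x ∈ Icc a b, ∀ y ∈ Icc a b, Dt x = Dt y := by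
  set s := Icc a b
  set g : ℝ → ℂ := fun θ => derivWithin k s θ * Dt θ
  have hg : ContinuousOn g s := (hk.continuousOn_derivWithin (uniqueDiffOn_Icc hab) le_rfl).mul hDt
  have hprim : ∀ x ∈ s, HasDerivWithinAt (fun u => k a * Dt a + ∫ θ in a..u, g θ) (g x) s x :=
    fun x hx => by simpa using (hg.hasDerivWithinAt_integral_Icc hx).const_add (k a * Dt a)
  have hidOn : EqOn (fun β => k β * Dt β) (fun β => k a * Dt a + ∫ θ in a..β, g θ) s :=
    EqOn.of_subset_closure hid (hk.continuousOn.mul hDt)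
      (fun x hx => (hprim x hx).continuousWithinAt) hΔsub hΔdense
  have hk' : ∀ x ∈ s, HasDerivWithinAt k (derivWithin k s x) s x :=
    fun x hx => ((hk.differentiableOn one_ne_zero) x hx).hasDerivWithinAt
  have hDt' : ∀ x ∈ s, HasDerivWithinAt Dt 0 s x := fun x hx =>
    (hk' x hx).hasDerivWithinAt_zero_of_mul
      ((hprim x hx).congr (fun y hy => hidOn hy) (hidOn hx)) hk0 hx
  exact fun x hx y hy => (convex_Icc a b).is_const_of_hasDerivWithinAt_zero hDt' hx hy
end

section
/- Let t ∈ ℝ, s = 1/2 + it, let w₀ be a point of the open unit disk D ⊂ ℂ, let d(z,w) = log((|1 − z̄w| + |z − w|)/(|1 − z̄w| − |z − w|)) be the hyperbolic distance on D, and set z(r,θ) = tanh(r/2)·e^{iθ}. Then there exist constants C > 0 and R₀ > 0 such that for all r ≥ R₀ and all θ ∈ ℝ: | ∂/∂r [ exp(−s·d(w₀, z(r,θ))) ] + s·exp(−s·d(w₀, z(r,θ))) | ≤ C·e^{−3r/2}. -/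
/-!
Write `A = ‖1 - conj w₀ * z‖` and `B = ‖w₀ - z‖`. Since `A² - B² = (1 - ‖w₀‖²)(1 - ‖z‖²)` and
`1 - ‖z(r,θ)‖² = cosh⁻²(r/2)`, along the ray the distance is
`d = 2 log (A + B) + 2 log cosh (r/2) - log (1 - ‖w₀‖²)`. As functions of `z`, `A` and `B` are
Lipschitz, and `‖∂z/∂r‖ = cosh⁻²(r/2)/2`, so `∂d/∂r = tanh (r/2) + O(e^{-r}) = 1 + O(e^{-r})`;
and `A + B ≥ 1 - ‖w₀‖` gives `‖e^{-s d}‖ = e^{-d/2} = O(e^{-r/2})`. The quantity to bound is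
`s (1 - ∂d/∂r) e^{-s d}`.
-/

open Complex Real Set Filter Topology ComplexConjugate

noncomputable section

def hdist (z w : ℂ) : ℝ :=
  Real.log ((‖1 - conj z * w‖ + ‖z - w‖) /
    (‖1 - conj z * w‖ - ‖z - w‖))

theorem norm_deriv_cexp_neg_mul_add_mul {D : ℝ → ℝ} {D' r : ℝ} (s : ℂ) (hD : HasDerivAt D D' r) :
    ‖deriv (fun r => cexp (-s * D r)) r + s * cexp (-s * D r)‖
      = ‖s‖ * |1 - D'| * Real.exp (-s.re * D r) := by
  rw [((hD.ofReal_comp.const_mul (-s)).cexp).deriv,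
    show cexp (-s * D r) * (-s * D') + s * cexp (-s * D r) = s * (1 - D' : ℝ) * cexp (-s * D r) by
      push_cast; ring,
    norm_mul, norm_mul, norm_real, Real.norm_eq_abs, Complex.norm_exp]
  simp

theorem HasDerivAt.exists_hasDerivAt_norm {F : Type*} [NormedAddCommGroup F] [InnerProductSpace ℝ F]
    {f : ℝ → F} {f' : F} {x : ℝ} (hf : HasDerivAt f f' x) (h0 : f x ≠ 0) :
    ∃ D, HasDerivAt (‖f ·‖) D x ∧ |D| ≤ ‖f'‖ := by
  have hpos : 0 < ‖f x‖ := norm_pos_iff.2 h0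
  have hderiv := hf.norm_sq.sqrt (pow_pos hpos 2).ne'
  simp only [Real.sqrt_sq (norm_nonneg _)] at hderiv
  refine ⟨_, hderiv, ?_⟩
  rw [mul_div_mul_left _ _ two_ne_zero, abs_div, abs_norm, div_le_iff₀ hpos, mul_comm]
  exact abs_real_inner_le_norm _ _

theorem norm_one_sub_conj_mul_sq_sub_norm_sub_sq (z w : ℂ) :
    ‖1 - conj z * w‖ ^ 2 - ‖z - w‖ ^ 2 = (1 - ‖z‖ ^ 2) * (1 - ‖w‖ ^ 2) := by
  simp only [Complex.sq_norm, Complex.normSq_apply, sub_re, sub_im, mul_re, mul_im, conj_re,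
    conj_im, one_re, one_im]
  ring

theorem hdist_eq_two_mul_log_sub {z w : ℂ} (hz : ‖z‖ < 1) (hw : ‖w‖ < 1) :
    hdist z w = 2 * Real.log (‖1 - conj z * w‖ + ‖z - w‖)
      - Real.log (1 - ‖z‖ ^ 2) - Real.log (1 - ‖w‖ ^ 2) := by
  have hz' : 0 < 1 - ‖z‖ ^ 2 := by nlinarith [norm_nonneg z]
  have hw' : 0 < 1 - ‖w‖ ^ 2 := by nlinarith [norm_nonneg w]
  have hAB := norm_one_sub_conj_mul_sq_sub_norm_sub_sq z w
  set A := ‖1 - conj z * w‖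
  set B := ‖z - w‖
  have hBA : B < A := by
    refine lt_of_pow_lt_pow_left₀ 2 (norm_nonneg _) ?_
    nlinarith [mul_pos hz' hw']
  have hB : 0 ≤ B := norm_nonneg _
  have hApB : A + B ≠ 0 := by linarith
  rw [hdist, show (A + B) / (A - B) = (A + B) ^ 2 / ((1 - ‖z‖ ^ 2) * (1 - ‖w‖ ^ 2)) by
      rw [← hAB, div_eq_div_iff (by linarith) (by nlinarith)]; ring,
    Real.log_div (pow_ne_zero 2 hApB) (mul_pos hz' hw').ne', Real.log_mul hz'.ne' hw'.ne',
    Real.log_pow]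
  push_cast
  ring

theorem one_sub_norm_le_norm_one_sub_conj_mul {z w : ℂ} (hw : ‖w‖ ≤ 1) :
    1 - ‖z‖ ≤ ‖1 - conj z * w‖ := by
  calc 1 - ‖z‖ ≤ 1 - ‖z‖ * ‖w‖ := by nlinarith [norm_nonneg z]
    _ = ‖(1 : ℂ)‖ - ‖conj z * w‖ := by rw [norm_one, norm_mul, norm_conj]
    _ ≤ _ := norm_sub_norm_le _ _

theorem two_mul_log_one_sub_norm_sub_log_le_hdist {z w : ℂ} (hz : ‖z‖ < 1) (hw : ‖w‖ < 1) :
    2 * Real.log (1 - ‖z‖) - Real.log (1 - ‖w‖ ^ 2) ≤ hdist z w := by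
  rw [hdist_eq_two_mul_log_sub hz hw]
  have hA := one_sub_norm_le_norm_one_sub_conj_mul (z := z) hw.le
  have hlogA : Real.log (1 - ‖z‖) ≤ Real.log (‖1 - conj z * w‖ + ‖z - w‖) :=
    Real.log_le_log (by linarith) (by linarith [norm_nonneg (z - w)])
  have hlogz : Real.log (1 - ‖z‖ ^ 2) ≤ 0 :=
    Real.log_nonpos (by nlinarith [norm_nonneg z]) (by nlinarith [norm_nonneg z])
  linarith

theorem Real.hasDerivAt_tanh (x : ℝ) : HasDerivAt tanh (cosh x ^ 2)⁻¹ x := by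
  have h := (hasDerivAt_sinh x).div (hasDerivAt_cosh x) (cosh_pos x).ne'
  rw [show sinh / cosh = tanh by funext y; exact (tanh_eq_sinh_div_cosh y).symm] at h
  refine h.congr_deriv ?_
  have := (cosh_pos x).ne'
  field_simp
  linear_combination cosh_sq_sub_sinh_sq x

theorem Real.one_sub_tanh_sq (x : ℝ) : 1 - tanh x ^ 2 = (cosh x ^ 2)⁻¹ := by
  have := (cosh_pos x).ne'
  rw [tanh_eq_sinh_div_cosh, div_pow]
  field_simp
  linear_combination cosh_sq_sub_sinh_sq x

theorem Real.inv_cosh_le_two_mul_exp_neg (x : ℝ) : (cosh x)⁻¹ ≤ 2 * Real.exp (-x) := by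
  rw [inv_le_iff_one_le_mul₀ (cosh_pos x), cosh_eq, Real.exp_neg]
  have := Real.exp_pos x
  field_simp
  nlinarith [Real.exp_pos x, inv_pos.2 this]

theorem Real.tanh_lt_tanh {x y : ℝ} (h : x < y) : tanh x < tanh y := by
  rwa [← artanh_lt_artanh_iff (abs_lt.1 (abs_tanh_lt_one x)) (abs_lt.1 (abs_tanh_lt_one y)),
    artanh_tanh, artanh_tanh]

def diskPolar (r θ : ℝ) : ℂ := (Real.tanh (r / 2) : ℂ) * cexp (θ * I)

theorem norm_diskPolar (r θ : ℝ) : ‖diskPolar r θ‖ = |Real.tanh (r / 2)| := by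
  rw [diskPolar, norm_mul, norm_real, Real.norm_eq_abs, norm_exp_ofReal_mul_I, mul_one]

theorem norm_diskPolar_lt_one (r θ : ℝ) : ‖diskPolar r θ‖ < 1 := by
  rw [norm_diskPolar]
  exact abs_tanh_lt_one _

theorem log_one_sub_norm_diskPolar_sq (r θ : ℝ) :
    Real.log (1 - ‖diskPolar r θ‖ ^ 2) = -(2 * Real.log (Real.cosh (r / 2))) := by
  rw [norm_diskPolar, sq_abs, one_sub_tanh_sq, Real.log_inv, Real.log_pow]
  push_cast
  ring

theorem hasDerivAt_diskPolar (r θ : ℝ) :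
    HasDerivAt (diskPolar · θ) ((((Real.cosh (r / 2) ^ 2)⁻¹ / 2 : ℝ) : ℂ) * cexp (θ * I)) r := by
  have h := ((Real.hasDerivAt_tanh (r / 2)).comp r ((hasDerivAt_id r).div_const 2)).ofReal_comp
  refine (h.mul_const (cexp (θ * I))).congr_deriv ?_
  push_cast
  ring

theorem exp_neg_half_mul_hdist_diskPolar_le {w : ℂ} (hw : ‖w‖ < 1) (r θ : ℝ) :
    Real.exp (-(1 / 2) * hdist w (diskPolar r θ)) ≤ ((1 - ‖w‖) * Real.cosh (r / 2))⁻¹ := by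
  have hlower := two_mul_log_one_sub_norm_sub_log_le_hdist hw (norm_diskPolar_lt_one r θ)
  rw [log_one_sub_norm_diskPolar_sq] at hlower
  have hpos : 0 < (1 - ‖w‖) * Real.cosh (r / 2) := mul_pos (by linarith) (cosh_pos _)
  rw [← Real.exp_log (inv_pos.2 hpos), Real.log_inv, Real.log_mul (by linarith) (cosh_pos _).ne',
    Real.exp_le_exp]
  linarith

theorem hdist_diskPolar {w : ℂ} (hw : ‖w‖ < 1) (r θ : ℝ) :
    hdist w (diskPolar r θ) = 2 * Real.log (‖1 - conj w * diskPolar r θ‖ + ‖w - diskPolar r θ‖)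
      - Real.log (1 - ‖w‖ ^ 2) + 2 * Real.log (Real.cosh (r / 2)) := by
  rw [hdist_eq_two_mul_log_sub hw (norm_diskPolar_lt_one r θ), log_one_sub_norm_diskPolar_sq]
  ring

theorem hasDerivAt_two_mul_log_cosh_half (r : ℝ) :
    HasDerivAt (fun r => 2 * Real.log (Real.cosh (r / 2))) (Real.tanh (r / 2)) r := by
  have h := (Real.hasDerivAt_cosh (r / 2)).comp r ((hasDerivAt_id r).div_const 2)
  refine ((h.log (Real.cosh_pos _).ne').const_mul 2).congr_deriv ?_
  simp only [Function.comp_apply, id, Real.tanh_eq_sinh_div_cosh]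
  ring

theorem exists_hasDerivAt_norm_add_norm_diskPolar {w : ℂ} {r : ℝ} (θ : ℝ)
    (hw : ‖w‖ < Real.tanh (r / 2)) :
    ∃ E, HasDerivAt (fun r => ‖1 - conj w * diskPolar r θ‖ + ‖w - diskPolar r θ‖) E r ∧
      |E| ≤ (1 + ‖w‖) * ((Real.cosh (r / 2) ^ 2)⁻¹ / 2) := by
  have hγ := hasDerivAt_diskPolar r θ
  set c := (Real.cosh (r / 2) ^ 2)⁻¹ / 2
  have hnorm_γ' : ‖(c : ℂ) * cexp (θ * I)‖ = c := by
    rw [norm_mul, norm_real, Real.norm_eq_abs, norm_exp_ofReal_mul_I, mul_one,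
      abs_of_nonneg (by positivity)]
  have hA : 1 - conj w * diskPolar r θ ≠ 0 := norm_pos_iff.1 <| by
    linarith [one_sub_norm_le_norm_one_sub_conj_mul (z := w) (norm_diskPolar_lt_one r θ).le,
      hw.trans (tanh_lt_one _)]
  have hB : w - diskPolar r θ ≠ 0 := sub_ne_zero.2 fun h => by
    rw [h, norm_diskPolar] at hw
    exact hw.not_ge (le_abs_self _)
  obtain ⟨A', hA', hA'_le⟩ := ((hγ.const_mul (conj w)).const_sub 1).exists_hasDerivAt_norm hA
  obtain ⟨B', hB', hB'_le⟩ := (hγ.const_sub w).exists_hasDerivAt_norm hB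
  rw [norm_neg, norm_mul, norm_conj, hnorm_γ'] at hA'_le
  rw [norm_neg, hnorm_γ'] at hB'_le
  exact ⟨A' + B', hA'.add hB', by linarith [abs_add_le A' B']⟩

theorem exists_hasDerivAt_hdist_diskPolar {w : ℂ} {r : ℝ} (θ : ℝ) (hw : ‖w‖ < Real.tanh (r / 2)) :
    ∃ D', HasDerivAt (fun r => hdist w (diskPolar r θ)) D' r ∧
      |1 - D'| ≤ 2 / ((1 - ‖w‖) * Real.cosh (r / 2) ^ 2) := by
  have hw1 : ‖w‖ < 1 := hw.trans (tanh_lt_one _)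
  obtain ⟨E, hE, hE_le⟩ := exists_hasDerivAt_norm_add_norm_diskPolar θ hw
  set c := (Real.cosh (r / 2) ^ 2)⁻¹ with hc
  set S := ‖1 - conj w * diskPolar r θ‖ + ‖w - diskPolar r θ‖
  have hS : 1 - ‖w‖ ≤ S := by
    linarith [one_sub_norm_le_norm_one_sub_conj_mul (z := w) (norm_diskPolar_lt_one r θ).le,
      norm_nonneg (w - diskPolar r θ)]
  refine ⟨2 * (E / S) + Real.tanh (r / 2), ?_, ?_⟩
  · rw [funext (hdist_diskPolar hw1 · θ)]
    exact (((hE.log (by linarith)).const_mul 2).sub_const _).add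
      (hasDerivAt_two_mul_log_cosh_half r)
  have htanh : |1 - Real.tanh (r / 2)| ≤ c := by
    rw [hc, ← one_sub_tanh_sq, abs_of_pos (by linarith [tanh_lt_one (r / 2)])]
    nlinarith [norm_nonneg w, tanh_lt_one (r / 2)]
  have hquot : |2 * (E / S)| ≤ (1 + ‖w‖) * c / (1 - ‖w‖) := by
    rw [abs_mul, abs_div, abs_two, abs_of_nonneg (by linarith : 0 ≤ S)]
    calc 2 * (|E| / S) ≤ 2 * ((1 + ‖w‖) * (c / 2) / (1 - ‖w‖)) := by gcongr
      _ = (1 + ‖w‖) * c / (1 - ‖w‖) := by ring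
  calc |1 - (2 * (E / S) + Real.tanh (r / 2))|
      ≤ |1 - Real.tanh (r / 2)| + |2 * (E / S)| := by
        rw [show 1 - (2 * (E / S) + Real.tanh (r / 2))
          = (1 - Real.tanh (r / 2)) - 2 * (E / S) by ring]
        exact abs_sub _ _
    _ ≤ c + (1 + ‖w‖) * c / (1 - ‖w‖) := add_le_add htanh hquot
    _ = 2 / ((1 - ‖w‖) * Real.cosh (r / 2) ^ 2) := by
        have : 1 - ‖w‖ ≠ 0 := by linarith
        rw [hc]
        field_simp
        ring

/-- The decay estimate for the translated spherical kernel `g' = exp(−s·d(w₀,·))` along the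
hyperbolic circles of radius `r` about the origin:
`|∂/∂r e^{−s·d(w₀,z(r,θ))} + s·e^{−s·d(w₀,z(r,θ))}| ≤ C·e^{−3r/2}` for `r` large. -/
theorem stmt13 (t : ℝ) (w₀ : ℂ) (hw₀ : w₀ ∈ Metric.ball (0 : ℂ) 1) :
    ∃ C > 0, ∃ R₀ > 0, ∀ r ≥ R₀, ∀ θ : ℝ,
      ‖deriv (fun r' : ℝ => Complex.exp (-((1 : ℂ) / 2 + t * Complex.I) *
            (hdist w₀ ((Real.tanh (r' / 2) : ℂ) * Complex.exp (θ * Complex.I)) : ℝ))) r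
        + ((1 : ℂ) / 2 + t * Complex.I) * Complex.exp (-((1 : ℂ) / 2 + t * Complex.I) *
            (hdist w₀ ((Real.tanh (r / 2) : ℂ) * Complex.exp (θ * Complex.I)) : ℝ))‖
      ≤ C * Real.exp (-3 * r / 2) := by
  have hw : ‖w₀‖ < 1 := mem_ball_zero_iff.1 hw₀
  set s : ℂ := 1 / 2 + t * I
  have hs_re : s.re = 1 / 2 := by simp [s]
  have hs : 0 < ‖s‖ := norm_pos_iff.2 fun h => by norm_num [h] at hs_re
  have ha : 0 < 1 - ‖w₀‖ := by linarith
  refine ⟨16 * ‖s‖ / (1 - ‖w₀‖) ^ 2, by positivity, 2 * artanh ‖w₀‖ + 1,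
    by linarith [artanh_nonneg (norm_nonneg w₀)], fun r hr θ => ?_⟩
  have hwr : ‖w₀‖ < Real.tanh (r / 2) := by
    rw [← tanh_artanh ⟨by linarith [norm_nonneg w₀], hw⟩]
    exact tanh_lt_tanh (by linarith)
  obtain ⟨D', hD, hD'⟩ := exists_hasDerivAt_hdist_diskPolar θ hwr
  set c := Real.cosh (r / 2)
  calc _ = ‖s‖ * |1 - D'| * Real.exp (-s.re * hdist w₀ (diskPolar r θ)) :=
        norm_deriv_cexp_neg_mul_add_mul (D := fun r => hdist w₀ (diskPolar r θ)) s hD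
    _ ≤ ‖s‖ * (2 / ((1 - ‖w₀‖) * c ^ 2)) * ((1 - ‖w₀‖) * c)⁻¹ := by
        rw [hs_re]
        gcongr
        exact exp_neg_half_mul_hdist_diskPolar_le hw r θ
    _ = 2 * ‖s‖ / (1 - ‖w₀‖) ^ 2 * c⁻¹ ^ 3 := by
        field_simp
    _ ≤ 2 * ‖s‖ / (1 - ‖w₀‖) ^ 2 * (2 * Real.exp (-(r / 2))) ^ 3 := by
        gcongr
        exact inv_cosh_le_two_mul_exp_neg _
    _ = 16 * ‖s‖ / (1 - ‖w₀‖) ^ 2 * Real.exp (-3 * r / 2) := by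
        rw [mul_pow, ← Real.exp_nat_mul]
        ring_nf
end
end

section
/- Let X and Y be sets, Σ̂ ⊆ X × Y, T̂ : Σ̂ → Σ̂ a bijection, and T_L : X → X, T_R : Y → Y maps such that for every (ξ,η) ∈ Σ̂ the first coordinate of T̂(ξ,η) is T_L(ξ) and for every (ξ',η') ∈ Σ̂ the second coordinate of T̂^{−1}(ξ',η') is T_R(η'). Let A_L : X → ℂ, A_R : Y → ℂ, and let k : X × Y → ℂ satisfy k(ξ,η) = 0 for (ξ,η) ∉ Σ̂ and the involution law: for every (ξ,η) ∈ Σ̂, writing (ξ',η') = T̂(ξ,η), k(ξ,η)·e^{A_L(ξ)} = k(ξ',η')·e^{A_R(η')}. Fix ξ' ∈ X and η ∈ Y and assume the preimage sets { ξ : T_L(ξ) = ξ' } and { η' : T_R(η') = η } are finite. Then Σ_{η' : T_R(η') = η} k(ξ',η')·e^{A_R(η')} = Σ_{ξ : T_L(ξ) = ξ'} k(ξ,η)·e^{A_L(ξ)}. -/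
/-!
On `Sig`, `T̂` sends the horizontal fibre `{(ξ, η) ∈ Sig | T_L ξ = ξ'}` bijectively onto the
vertical fibre `{(ξ', η') ∈ Sig | T_R η' = η}`. Since `k` vanishes off `Sig`, both
sums run over these fibres, and the involution law matches their terms along the bijection.
-/

open Set Function

theorem finsum_mem_inter_eq_of_support_subset {α M : Type*} [AddCommMonoid M] {f : α → M}
    (s : Set α) {t : Set α} (ht : support f ⊆ t) : ∑ᶠ i ∈ s ∩ t, f i = ∑ᶠ i ∈ s, f i :=
  finsum_mem_inter_support_eq' f _ _ fun _ hx => and_iff_left (ht hx)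

section BakerMap

variable {X Y : Type*} {Sig : Set (X × Y)} {That : X × Y → X × Y} {TL : X → X} {TR : Y → Y}

theorem eq_mk_of_fst_map (hL : ∀ p ∈ Sig, (That p).1 = TL p.1) {p : X × Y} (hp : p ∈ Sig) :
    That p = (TL p.1, (That p).2) :=
  Prod.ext (hL p hp) rfl

theorem bijOn_snd_map_fiber (hbij : BijOn That Sig Sig) (hL : ∀ p ∈ Sig, (That p).1 = TL p.1)
    (hR : ∀ p ∈ Sig, p.2 = TR (That p).2) (ξ' : X) (η : Y) :
    BijOn (fun ξ => (That (ξ, η)).2) ({ξ | TL ξ = ξ'} ∩ {ξ | (ξ, η) ∈ Sig})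
      ({η' | TR η' = η} ∩ {η' | (ξ', η') ∈ Sig}) := by
  refine ⟨?mapsTo, ?injOn, ?surjOn⟩
  case mapsTo =>
    rintro ξ ⟨rfl, hξ⟩
    refine ⟨(hR _ hξ).symm, ?_⟩
    simpa only [mem_ofPred_eq, ← eq_mk_of_fst_map hL hξ] using hbij.mapsTo hξ
  case injOn =>
    rintro ξ₁ ⟨rfl, hξ₁⟩ ξ₂ ⟨hfst, hξ₂⟩ hsnd
    have hmap : That (ξ₁, η) = That (ξ₂, η) := by
      rw [eq_mk_of_fst_map hL hξ₁, eq_mk_of_fst_map hL hξ₂, hfst]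
      exact Prod.ext rfl hsnd
    exact congrArg Prod.fst (hbij.injOn hξ₁ hξ₂ hmap)
  case surjOn =>
    rintro η' ⟨rfl, hη'⟩
    obtain ⟨p, hp, hpη'⟩ := hbij.surjOn hη'
    have hp_fst : TL p.1 = ξ' := by rw [← hL p hp, hpη']
    have hp_eq : (p.1, TR η') = p := Prod.ext rfl (by rw [hR p hp, hpη'])
    exact ⟨p.1, ⟨hp_fst, by rwa [mem_ofPred_eq, hp_eq]⟩, by simp only [hp_eq, hpη']⟩

end BakerMap

theorem stmt17_general {X Y : Type*} (Sig : Set (X × Y)) (That : X × Y → X × Y)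
    (hbij : Set.BijOn That Sig Sig)
    (TL : X → X) (TR : Y → Y)
    (hL : ∀ p ∈ Sig, (That p).1 = TL p.1)
    (hR : ∀ p ∈ Sig, p.2 = TR (That p).2)
    (AL : X → ℂ) (AR : Y → ℂ) (k : X × Y → ℂ)
    (hk0 : ∀ p : X × Y, p ∉ Sig → k p = 0)
    (hinv : ∀ p ∈ Sig, k p * Complex.exp (AL p.1) = k (That p) * Complex.exp (AR (That p).2))
    (ξ' : X) (η : Y) :
    ∑ᶠ η' ∈ {η' : Y | TR η' = η}, k (ξ', η') * Complex.exp (AR η')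
      = ∑ᶠ ξ ∈ {ξ : X | TL ξ = ξ'}, k (ξ, η) * Complex.exp (AL ξ) := by
  have hsuppR : (support fun η' => k (ξ', η') * Complex.exp (AR η')) ⊆ {η' | (ξ', η') ∈ Sig} :=
    (support_mul_subset_left _ _).trans (support_subset_iff'.2 fun _ => hk0 _)
  have hsuppL : (support fun ξ => k (ξ, η) * Complex.exp (AL ξ)) ⊆ {ξ | (ξ, η) ∈ Sig} :=
    (support_mul_subset_left _ _).trans (support_subset_iff'.2 fun _ => hk0 _)
  rw [← finsum_mem_inter_eq_of_support_subset _ hsuppR,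
    ← finsum_mem_inter_eq_of_support_subset _ hsuppL]
  refine (finsum_mem_eq_of_bijOn _ (bijOn_snd_map_fiber hbij hL hR ξ' η) ?_).symm
  rintro ξ ⟨rfl, hξ⟩
  rw [hinv _ hξ, eq_mk_of_fst_map hL hξ]

/-- Lemma 10 of the paper: if `k` is an involution kernel for the potentials `A_L`, `A_R`
relative to a baker-type bijection `T̂` of `Sig ⊆ X × Y` (with left factor `T_L` and inverse
right factor `T_R`), then `L_R(k(ξ',·))(η) = L_L(k(·,η))(ξ')`. -/
theorem stmt17 {X Y : Type*} (Sig : Set (X × Y)) (That : X × Y → X × Y)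
    (hbij : Set.BijOn That Sig Sig)
    (TL : X → X) (TR : Y → Y)
    (hL : ∀ p ∈ Sig, (That p).1 = TL p.1)
    (hR : ∀ p ∈ Sig, p.2 = TR (That p).2)
    (AL : X → ℂ) (AR : Y → ℂ) (k : X × Y → ℂ)
    (hk0 : ∀ p : X × Y, p ∉ Sig → k p = 0)
    (hinv : ∀ p ∈ Sig, k p * Complex.exp (AL p.1) = k (That p) * Complex.exp (AR (That p).2))
    (ξ' : X) (η : Y)
    (hfinL : {ξ : X | TL ξ = ξ'}.Finite)
    (hfinR : {η' : Y | TR η' = η}.Finite) :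
    ∑ᶠ η' ∈ {η' : Y | TR η' = η}, k (ξ', η') * Complex.exp (AR η')
      = ∑ᶠ ξ ∈ {ξ : X | TL ξ = ξ'}, k (ξ, η) * Complex.exp (AL ξ) :=
  stmt17_general Sig That hbij TL TR hL hR AL AR k hk0 hinv ξ' η
end

section
/- Let Y be a measurable space, T_R : Y → Y a map with finite preimage sets, A_R : Y → ℂ, ν a finite complex measure on Y, and λ ∈ ℂ, and define (L_R φ)(η) = Σ_{η' : T_R(η') = η} e^{A_R(η')}·φ(η'). Assume ∫ (L_R φ) dν = λ·∫ φ dν for every bounded measurable φ : Y → ℂ. Let X be a set, T_L : X → X a map with finite preimage sets, A_L : X → ℂ, and k : X × Y → ℂ such that for each ξ ∈ X the function k(ξ,·) is bounded and measurable, and such that for all ξ' ∈ X and η ∈ Y: Σ_{ξ : T_L(ξ) = ξ'} e^{A_L(ξ)}·k(ξ,η) = (L_R k(ξ',·))(η). Define ψ(ξ) = ∫ k(ξ,η) dν(η). Then for every ξ' ∈ X: Σ_{ξ : T_L(ξ) = ξ'} e^{A_L(ξ)}·ψ(ξ) = λ·ψ(ξ'); that is, L_L ψ = λψ. -/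
open Set MeasureTheory

noncomputable section

/-- Integration of a complex-valued function against a (finite) complex measure, via the
Jordan decompositions of its real and imaginary parts. -/
def cInt {Y : Type*} [MeasurableSpace Y] (ν : MeasureTheory.ComplexMeasure Y) (f : Y → ℂ) : ℂ :=
  ((∫ y, f y ∂(MeasureTheory.ComplexMeasure.re ν).toJordanDecomposition.posPart) -
      ∫ y, f y ∂(MeasureTheory.ComplexMeasure.re ν).toJordanDecomposition.negPart) +
    Complex.I *
      ((∫ y, f y ∂(MeasureTheory.ComplexMeasure.im ν).toJordanDecomposition.posPart) -
        ∫ y, f y ∂(MeasureTheory.ComplexMeasure.im ν).toJordanDecomposition.negPart)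

section cInt

variable {Y ι : Type*} [MeasurableSpace Y] (ν : ComplexMeasure Y)

lemma cInt_const_mul (c : ℂ) (f : Y → ℂ) : cInt ν (fun y => c * f y) = c * cInt ν f := by
  simp only [cInt, integral_const_mul]
  ring

lemma cInt_finsetSum (s : Finset ι) {f : ι → Y → ℂ} (hm : ∀ i ∈ s, Measurable (f i))
    (hb : ∀ i ∈ s, ∃ C : ℝ, ∀ y, ‖f i y‖ ≤ C) :
    cInt ν (fun y => ∑ i ∈ s, f i y) = ∑ i ∈ s, cInt ν (f i) := by
  have integral_sum (μ : Measure Y) [IsFiniteMeasure μ] :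
      ∫ y, ∑ i ∈ s, f i y ∂μ = ∑ i ∈ s, ∫ y, f i y ∂μ :=
    integral_finsetSum s fun i hi =>
      Integrable.of_bound (hm i hi).aestronglyMeasurable (hb i hi).choose
        (ae_of_all μ (hb i hi).choose_spec)
  simp only [cInt, integral_sum]
  rw [← Finset.sum_sub_distrib, ← Finset.sum_sub_distrib, Finset.mul_sum,
    ← Finset.sum_add_distrib]

lemma cInt_finsum_mem {s : Set ι} (hs : s.Finite) {f : ι → Y → ℂ}
    (hm : ∀ i ∈ s, Measurable (f i)) (hb : ∀ i ∈ s, ∃ C : ℝ, ∀ y, ‖f i y‖ ≤ C) :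
    cInt ν (fun y => ∑ᶠ i ∈ s, f i y) = ∑ᶠ i ∈ s, cInt ν (f i) := by
  simp only [finsum_mem_eq_finite_toFinset_sum _ hs]
  exact cInt_finsetSum ν hs.toFinset (fun i hi => hm i (hs.mem_toFinset.1 hi))
    fun i hi => hb i (hs.mem_toFinset.1 hi)

end cInt

theorem stmt18_general {X Y : Type*} [MeasurableSpace Y]
    (TR : Y → Y) (AR : Y → ℂ) (ν : MeasureTheory.ComplexMeasure Y) (lam : ℂ)
    (heig : ∀ φ : Y → ℂ, Measurable φ → (∃ C : ℝ, ∀ y : Y, ‖φ y‖ ≤ C) →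
      cInt ν (fun η => ∑ᶠ η' ∈ {η' : Y | TR η' = η}, Complex.exp (AR η') * φ η')
        = lam * cInt ν φ)
    (TL : X → X) (AL : X → ℂ)
    (hfinL : ∀ ξ' : X, {ξ : X | TL ξ = ξ'}.Finite)
    (k : X → Y → ℂ)
    (hkmeas : ∀ ξ : X, Measurable (k ξ))
    (hkbdd : ∀ ξ : X, ∃ C : ℝ, ∀ η : Y, ‖k ξ η‖ ≤ C)
    (hker : ∀ (ξ' : X) (η : Y),
      ∑ᶠ ξ ∈ {ξ : X | TL ξ = ξ'}, Complex.exp (AL ξ) * k ξ η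
        = ∑ᶠ η' ∈ {η' : Y | TR η' = η}, Complex.exp (AR η') * k ξ' η')
    (ψ : X → ℂ) (hψ : ∀ ξ : X, ψ ξ = cInt ν (k ξ)) :
    ∀ ξ' : X, ∑ᶠ ξ ∈ {ξ : X | TL ξ = ξ'}, Complex.exp (AL ξ) * ψ ξ = lam * ψ ξ' := by
  intro ξ'
  have weighted_bdd (ξ : X) : ∃ C : ℝ, ∀ η, ‖Complex.exp (AL ξ) * k ξ η‖ ≤ C := by
    obtain ⟨C, hC⟩ := hkbdd ξ
    exact ⟨‖Complex.exp (AL ξ)‖ * C, fun η => by rw [norm_mul]; gcongr; exact hC η⟩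
  calc ∑ᶠ ξ ∈ {ξ : X | TL ξ = ξ'}, Complex.exp (AL ξ) * ψ ξ
      = ∑ᶠ ξ ∈ {ξ : X | TL ξ = ξ'}, cInt ν (fun η => Complex.exp (AL ξ) * k ξ η) := by
        simp only [hψ, cInt_const_mul]
    _ = cInt ν (fun η => ∑ᶠ ξ ∈ {ξ : X | TL ξ = ξ'}, Complex.exp (AL ξ) * k ξ η) :=
        (cInt_finsum_mem ν (hfinL ξ') (fun ξ _ => (hkmeas ξ).const_mul _)
          fun ξ _ => weighted_bdd ξ).symm
    _ = cInt ν (fun η => ∑ᶠ η' ∈ {η' : Y | TR η' = η}, Complex.exp (AR η') * k ξ' η') := by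
        simp only [hker]
    _ = lam * ψ ξ' := by rw [heig (k ξ') (hkmeas ξ') (hkbdd ξ'), hψ]

/-- Item 3 of the Remark preceding Lemma 8 of the paper: integrating a kernel intertwining
the left and right Ruelle transfer operators against an eigenmeasure `ν` of the dual right
transfer operator produces an eigenfunction `ψ(ξ) = ∫ k(ξ,η) dν(η)` of the left transfer
operator with the same eigenvalue. -/
theorem stmt18 {X Y : Type*} [MeasurableSpace Y]
    (TR : Y → Y) (AR : Y → ℂ) (ν : MeasureTheory.ComplexMeasure Y) (lam : ℂ)
    (hfinR : ∀ η : Y, {η' : Y | TR η' = η}.Finite)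
    (heig : ∀ φ : Y → ℂ, Measurable φ → (∃ C : ℝ, ∀ y : Y, ‖φ y‖ ≤ C) →
      cInt ν (fun η => ∑ᶠ η' ∈ {η' : Y | TR η' = η}, Complex.exp (AR η') * φ η')
        = lam * cInt ν φ)
    (TL : X → X) (AL : X → ℂ)
    (hfinL : ∀ ξ' : X, {ξ : X | TL ξ = ξ'}.Finite)
    (k : X → Y → ℂ)
    (hkmeas : ∀ ξ : X, Measurable (k ξ))
    (hkbdd : ∀ ξ : X, ∃ C : ℝ, ∀ η : Y, ‖k ξ η‖ ≤ C)
    (hker : ∀ (ξ' : X) (η : Y),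
      ∑ᶠ ξ ∈ {ξ : X | TL ξ = ξ'}, Complex.exp (AL ξ) * k ξ η
        = ∑ᶠ η' ∈ {η' : Y | TR η' = η}, Complex.exp (AR η') * k ξ' η')
    (ψ : X → ℂ) (hψ : ∀ ξ : X, ψ ξ = cInt ν (k ξ)) :
    ∀ ξ' : X, ∑ᶠ ξ ∈ {ξ : X | TL ξ = ξ'}, Complex.exp (AL ξ) * ψ ξ = lam * ψ ξ' :=
  stmt18_general TR AR ν lam heig TL AL hfinL k hkmeas hkbdd hker ψ hψ
end
end

section
/- Let u ≠ v be real numbers and let w = x + iy with y > 0 lie on the Euclidean semicircle (x − (u+v)/2)² + y² = ((u−v)/2)², i.e. on the hyperbolic geodesic of the upper half-plane with endpoints u and v. Define the half-plane Poisson kernel P(w,t) = (1+t²)·y/((x−t)² + y²) for t ∈ ℝ. Then P(w,u)·P(w,v) = (1+u²)(1+v²)/(u−v)²; equivalently, ((x−u)² + y²)·((x−v)² + y²) = (u−v)²·y². -/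
/-!
Thales: `w` lies on the semicircle over `[u, v]` iff `y² = -(x - u)(x - v)`. Then
`|w - u|² = (x - u)(v - u)` and `|w - v|² = (x - v)(u - v)`, whose product is
`-(x - u)(x - v)(u - v)² = (u - v)² y²`; the Poisson-kernel identity follows by cancelling `y²`.
-/

lemma sq_add_sq_eq_iff_sq_eq_neg_mul (u v x y : ℝ) :
    (x - (u + v) / 2) ^ 2 + y ^ 2 = ((u - v) / 2) ^ 2 ↔ y ^ 2 = -((x - u) * (x - v)) := by
  constructor <;> intro h <;> linear_combination h

lemma sub_sq_add_sq_eq_of_sq_eq_neg_mul {u v x y : ℝ} (h : y ^ 2 = -((x - u) * (x - v))) :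
    (x - u) ^ 2 + y ^ 2 = (x - u) * (v - u) := by
  linear_combination h

lemma sub_sq_add_sq_mul_sub_sq_add_sq_of_sq_eq_neg_mul {u v x y : ℝ}
    (h : y ^ 2 = -((x - u) * (x - v))) :
    ((x - u) ^ 2 + y ^ 2) * ((x - v) ^ 2 + y ^ 2) = (u - v) ^ 2 * y ^ 2 := by
  have h' : y ^ 2 = -((x - v) * (x - u)) := by linear_combination h
  rw [sub_sq_add_sq_eq_of_sq_eq_neg_mul h, sub_sq_add_sq_eq_of_sq_eq_neg_mul h']
  linear_combination -(u - v) ^ 2 * h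

/-- The upper half-plane form of the Gromov-distance/involution-kernel identity: for
`w = x + iy` on the geodesic semicircle with endpoints `u ≠ v` on the real axis,
`P(w,u)·P(w,v) = (1+u²)(1+v²)/(u−v)²`, where `P(w,t) = (1+t²)y/((x−t)²+y²)`; equivalently
`((x−u)²+y²)((x−v)²+y²) = (u−v)²y²`. -/
theorem stmt19 (u v x y : ℝ) (huv : u ≠ v) (hy : 0 < y)
    (hcirc : (x - (u + v) / 2) ^ 2 + y ^ 2 = ((u - v) / 2) ^ 2) :
    ((1 + u ^ 2) * y / ((x - u) ^ 2 + y ^ 2)) * ((1 + v ^ 2) * y / ((x - v) ^ 2 + y ^ 2))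
        = (1 + u ^ 2) * (1 + v ^ 2) / (u - v) ^ 2
    ∧ ((x - u) ^ 2 + y ^ 2) * ((x - v) ^ 2 + y ^ 2) = (u - v) ^ 2 * y ^ 2 := by
  have hprod := sub_sq_add_sq_mul_sub_sq_add_sq_of_sq_eq_neg_mul
    ((sq_add_sq_eq_iff_sq_eq_neg_mul u v x y).1 hcirc)
  refine ⟨?_, hprod⟩
  have huv' : u - v ≠ 0 := sub_ne_zero.mpr huv
  rw [div_mul_div_comm, hprod]
  field_simp
end
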